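/- arXiv:math/0406566 — 7 statements merged into one kernel-verified Lean document; each statement's English description precedes it below -/
import Mathlib

section
/- Let R be a commutative noetherian ring, M a finitely generated R-module, and f₁,…,f_r ∈ R. Then f₁,…,f_r is a strongly regular sequence on M if and only if for every s = 1,…,r the sequence f₁,…,f_s is a regular sequence on M. -/
open RingTheory.Sequence

/-- The paper's notion of a regular sequence on `M`: for every prime `𝔭` in the support of
`M/(f₁,…,f_r)M`, the images of `f₁,…,f_r` in `R_𝔭` form a strongly regular sequence
(i.e. a weakly regular sequence in the sense of Mathlib) on `M_𝔭`. -/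
def IsRegularSeq (R : Type*) [CommRing R] (M : Type*) [AddCommGroup M] [Module R M]
    (fs : List R) : Prop :=
  ∀ p ∈ Module.support R (M ⧸ (Ideal.ofList fs • ⊤ : Submodule R M)),
    IsWeaklyRegular (LocalizedModule p.asIdeal.primeCompl M)
      (fs.map (algebraMap R (Localization.AtPrime p.asIdeal)))

/-- Localization of `I • ⊤` is `(I.map (algebraMap R S)) • ⊤`. -/
lemma localized'_smul_top
    {R : Type*} [CommRing R] (S : Type*) [CommRing S] [Algebra R S]
    (p : Submonoid R) [IsLocalization p S]
    {M : Type*} [AddCommGroup M] [Module R M]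
    {N : Type*} [AddCommGroup N] [Module R N] [Module S N] [IsScalarTower R S N]
    (f : M →ₗ[R] N) [IsLocalizedModule p f] (I : Ideal R) :
    (I • ⊤ : Submodule R M).localized' S p f = I.map (algebraMap R S) • ⊤ := by
  apply le_antisymm
  · rintro x ⟨m, hm, s, rfl⟩
    revert s
    refine Submodule.smul_induction_on hm ?_ ?_
    · intro a ha u _ s
      rw [IsLocalizedModule.mk'_smul, ← algebraMap_smul S a]
      exact Submodule.smul_mem_smul (Ideal.mem_map_of_mem _ ha) trivial
    · intro x y hx hy s
      rw [IsLocalizedModule.mk'_add]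
      exact add_mem (hx s) (hy s)
  · have key : ∀ r ∈ Ideal.map (algebraMap R S) I, ∀ n : N,
        r • n ∈ (I • ⊤ : Submodule R M).localized' S p f := by
      intro r hr
      have hr' : r ∈ Submodule.span S ((algebraMap R S) '' (I : Set R)) := hr
      clear hr
      induction hr' using Submodule.span_induction with
      | mem x hx =>
        obtain ⟨a, ha, rfl⟩ := hx
        intro n
        obtain ⟨⟨u, s⟩, rfl⟩ := IsLocalizedModule.mk'_surjective p f n
        simp only [Function.uncurry_apply_pair]
        rw [algebraMap_smul, ← IsLocalizedModule.mk'_smul]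
        exact ⟨a • u, Submodule.smul_mem_smul ha trivial, s, rfl⟩
      | zero => intro n; rw [zero_smul]; exact Submodule.zero_mem _
      | add x y hx hy ihx ihy =>
        intro n
        rw [add_smul]
        exact Submodule.add_mem _ (ihx n) (ihy n)
      | smul c x hx ihx =>
        intro n
        rw [smul_eq_mul, mul_smul]
        exact Submodule.smul_mem _ c (ihx n)
    exact Submodule.smul_le.mpr fun r hr n _ => key r hr n

/-- Proposition: `f₁,…,f_r` is a strongly regular sequence on the finitely generated module `M`
iff for every `s = 1,…,r` the sequence `f₁,…,f_s` is a regular sequence on `M`. -/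
theorem strongly_regular_iff_initial_segments_regular
    {R : Type*} [CommRing R] [IsNoetherianRing R]
    {M : Type*} [AddCommGroup M] [Module R M] [Module.Finite R M] (fs : List R) :
    IsWeaklyRegular M fs ↔
      ∀ s : ℕ, 1 ≤ s → s ≤ fs.length → IsRegularSeq R M (fs.take s) := by
  constructor
  · intro h s _ _ p _
    set q := p.asIdeal.primeCompl
    set S := Localization.AtPrime p.asIdeal
    have h1 : IsWeaklyRegular M (fs.take s) :=
      ((isWeaklyRegular_append_iff M (fs.take s) (fs.drop s)).mp
        (by rw [List.take_append_drop]; exact h)).1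
    have h2 : IsWeaklyRegular (TensorProduct R S M) (fs.take s) :=
      h1.isWeaklyRegular_lTensor
    let e : TensorProduct R S M ≃ₗ[R] LocalizedModule q M :=
      ((IsLocalizedModule.isBaseChange q S
        (LocalizedModule.mkLinearMap q M)).equiv).restrictScalars R
    have h3 := (e.isWeaklyRegular_congr (fs.take s)).mp h2
    exact (isWeaklyRegular_map_algebraMap_iff S (LocalizedModule q M) (fs.take s)).mpr h3
  · intro H
    rw [isWeaklyRegular_iff]
    intro i hi
    by_contra hreg
    set K : Submodule R M := Ideal.ofList (fs.take i) • ⊤ with hK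
    rw [IsSMulRegular] at hreg
    obtain ⟨a, b, hab, hne⟩ := Function.not_injective_iff.mp hreg
    obtain ⟨m, hm0, hfm⟩ : ∃ m : M ⧸ K, m ≠ 0 ∧ fs[i] • m = 0 :=
      ⟨a - b, sub_ne_zero.mpr hne, by rw [smul_sub]; rw [sub_eq_zero]; exact hab⟩
    obtain ⟨x0, rfl⟩ := Submodule.Quotient.mk_surjective K m
    have hann : (Submodule.span R {Submodule.Quotient.mk (p := K) x0}).annihilator ≠ ⊤ := by
      rw [Ne, Ideal.eq_top_iff_one, Submodule.mem_annihilator_span_singleton]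
      rw [one_smul]
      exact hm0
    obtain ⟨P, hPmax, hP⟩ := Ideal.exists_le_maximal _ hann
    haveI hPp : P.IsPrime := hPmax.isPrime
    set p : PrimeSpectrum R := ⟨P, hPp⟩ with hp
    set q := p.asIdeal.primeCompl with hq
    set S := Localization.AtPrime p.asIdeal with hS
    have hfP : fs[i] ∈ P :=
      hP (by rw [Submodule.mem_annihilator_span_singleton]; exact hfm)
    have hKann : ∀ a ∈ Ideal.ofList (fs.take i),
        a ∈ (Submodule.span R {Submodule.Quotient.mk (p := K) x0}).annihilator := by
      intro a ha
      rw [Submodule.mem_annihilator_span_singleton, ← Submodule.Quotient.mk_smul,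
        Submodule.Quotient.mk_eq_zero]
      exact Submodule.smul_mem_smul ha trivial
    have hJP : Ideal.ofList (fs.take (i + 1)) ≤ P := by
      rw [Ideal.span_le]
      rintro x (hx : x ∈ fs.take (i + 1))
      rw [List.mem_take_iff_getElem] at hx
      obtain ⟨j, hj, rfl⟩ := hx
      rcases Nat.lt_or_ge j i with hji | hji
      · exact hP (hKann _ (Ideal.subset_span
          (List.mem_take_iff_getElem.mpr ⟨j, by omega, rfl⟩)))
      · have : j = i := by omega
        subst this
        exact hfP
    -- localization setup
    set f := LocalizedModule.mkLinearMap q M with hf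
    -- M_P is nontrivial and finite over S
    have hmkx0 : ∀ s : q, ¬ (s : R) • x0 ∈ K := by
      intro s hs
      have : (s : R) ∈ (Submodule.span R {Submodule.Quotient.mk (p := K) x0}).annihilator := by
        rw [Submodule.mem_annihilator_span_singleton, ← Submodule.Quotient.mk_smul,
          Submodule.Quotient.mk_eq_zero]
        exact hs
      exact s.2 (hP this)
    haveI : Nontrivial (LocalizedModule q M) := by
      refine ⟨IsLocalizedModule.mk' f x0 (1 : q), 0, ?_⟩
      rw [Ne, IsLocalizedModule.mk'_eq_zero' f (1 : q)]
      rintro ⟨s, hs⟩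
      refine hmkx0 s ?_
      rw [Submonoid.smul_def] at hs
      rw [hs]
      exact Submodule.zero_mem _
    haveI : Module.Finite S (LocalizedModule q M) :=
      Module.Finite.of_isLocalizedModule q f
    -- support membership
    have hsupp : p ∈ Module.support R
        (M ⧸ (Ideal.ofList (fs.take (i + 1)) • ⊤ : Submodule R M)) := by
      rw [Module.mem_support_iff]
      set J : Submodule R M := Ideal.ofList (fs.take (i + 1)) • ⊤ with hJ
      let gq := J.toLocalizedQuotient' S q f
      have htopne : ((Ideal.ofList (fs.take (i + 1))).map (algebraMap R S) • ⊤ :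
          Submodule S (LocalizedModule q M)) ≠ ⊤ := by
        refine Ne.symm (Submodule.top_ne_ideal_smul_of_le_jacobson_annihilator ?_)
        refine le_trans ?_ (IsLocalRing.maximalIdeal_le_jacobson _)
        rw [Ideal.map_le_iff_le_comap, ← Ideal.under_def, Localization.AtPrime.comap_maximalIdeal]
        exact hJP
      have hst : J.localized' S q f ≠ ⊤ := by
        rw [hJ, localized'_smul_top]
        exact htopne
      haveI : Nontrivial (LocalizedModule q M ⧸ J.localized' S q f) := by
        rw [← not_subsingleton_iff_nontrivial]
        intro hsub
        exact hst (Submodule.Quotient.subsingleton_iff.mp hsub)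
      exact Equiv.nontrivial (IsLocalizedModule.iso q gq).toEquiv
    -- use the hypothesis
    have hw := H (i + 1) (Nat.succ_le_succ (Nat.zero_le i)) hi p hsupp
    have hlen : i < ((fs.take (i + 1)).map (algebraMap R S)).length := by
      simp only [List.length_map, List.length_take]
      omega
    have hr := hw.regular_mod_prev i hlen
    -- simplify the quotient
    have htake : ((fs.take (i + 1)).map (algebraMap R S)).take i
        = (fs.take i).map (algebraMap R S) := by
      rw [← List.map_take, List.take_take, min_eq_left (Nat.le_succ i)]
    have hget : ((fs.take (i + 1)).map (algebraMap R S))[i]'hlen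
        = algebraMap R S fs[i] := by
      rw [List.getElem_map]
      congr 1
      exact List.getElem_take
    rw [htake, hget] at hr
    have hofs : (Ideal.ofList ((fs.take i).map (algebraMap R S)) • ⊤ :
        Submodule S (LocalizedModule q M)) = K.localized' S q f := by
      rw [hK, localized'_smul_top, Ideal.map_ofList]
    let el : (LocalizedModule q M ⧸ (Ideal.ofList ((fs.take i).map (algebraMap R S)) • ⊤ :
        Submodule S (LocalizedModule q M))) ≃ₗ[S]
        (LocalizedModule q M ⧸ K.localized' S q f) :=
      Submodule.quotEquivOfEq _ _ hofs
    have hr' : IsSMulRegular (LocalizedModule q M ⧸ K.localized' S q f)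
        (algebraMap R S fs[i]) :=
      (el.isSMulRegular_congr _).mp hr
    -- derive the contradiction
    let g := K.toLocalizedQuotient' S q f
    set x := IsLocalizedModule.mk' g (Submodule.Quotient.mk (p := K) x0) (1 : q) with hx
    have hxne : x ≠ 0 := by
      rw [hx, Ne, IsLocalizedModule.mk'_eq_zero' g (1 : q)]
      rintro ⟨s, hs⟩
      rw [Submonoid.smul_def, ← Submodule.Quotient.mk_smul,
        Submodule.Quotient.mk_eq_zero] at hs
      exact hmkx0 s hs
    have hsx : algebraMap R S fs[i] • x = algebraMap R S fs[i] • 0 := by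
      rw [smul_zero, algebraMap_smul, hx, ← IsLocalizedModule.mk'_smul, hfm,
        IsLocalizedModule.mk'_zero]
    exact hxne (hr' hsx)
end

section
/- Let R be a commutative noetherian ring, M an R-module, f₁,…,f_r ∈ R, and let S be a flat noetherian R-algebra. If f₁,…,f_r is a regular sequence on M, then the images f₁·1_S,…,f_r·1_S form a regular sequence on the S-module S ⊗_R M. -/
open RingTheory.Sequence

section Aux

open TensorProduct

variable {R : Type*} [CommRing R] {S : Type*} [CommRing S] [Algebra R S]

/-- If the localization of `P` at the preimage prime is trivial, so is the localization of
`S ⊗[R] P` at `q`. -/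
lemma aux_subsingleton (q : Ideal S) [q.IsPrime]
    (P : Type*) [AddCommGroup P] [Module R P]
    (hsub : Subsingleton
      (LocalizedModule (q.comap (algebraMap R S)).primeCompl P)) :
    Subsingleton (LocalizedModule q.primeCompl (S ⊗[R] P)) := by
  rw [LocalizedModule.subsingleton_iff] at hsub ⊢
  have key : ∀ n : S ⊗[R] P,
      ∃ r : R, r ∈ (q.comap (algebraMap R S)).primeCompl ∧ r • n = 0 := by
    intro n
    induction n using TensorProduct.induction_on with
    | zero => exact ⟨1, Submonoid.one_mem _, smul_zero _⟩
    | tmul a m =>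
      obtain ⟨r, hr, hr0⟩ := hsub m
      exact ⟨r, hr, by rw [smul_tmul', smul_tmul, hr0, tmul_zero]⟩
    | add x y hx hy =>
      obtain ⟨r₁, hr₁, h₁⟩ := hx
      obtain ⟨r₂, hr₂, h₂⟩ := hy
      refine ⟨r₁ * r₂, mul_mem hr₁ hr₂, ?_⟩
      have e1 : (r₁ * r₂) • x = 0 := by rw [mul_comm, mul_smul, h₁, smul_zero]
      have e2 : (r₁ * r₂) • y = 0 := by rw [mul_smul, h₂, smul_zero]
      rw [smul_add, e1, e2, add_zero]
  intro n
  obtain ⟨r, hr, h0⟩ := key n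
  exact ⟨algebraMap R S r, hr, by rwa [algebraMap_smul]⟩

/-- Triviality of the localization of the base-changed quotient module follows from triviality
of the localization of `S ⊗[R] (M ⧸ fsM)`. -/
lemma aux_support (q : Submonoid S) (fs : List R)
    (M : Type*) [AddCommGroup M] [Module R M]
    (hsub : Subsingleton (LocalizedModule q
      (S ⊗[R] (M ⧸ (Ideal.ofList fs • ⊤ : Submodule R M))))) :
    Subsingleton (LocalizedModule q
      ((S ⊗[R] M) ⧸ (Ideal.ofList (fs.map (algebraMap R S)) • ⊤ : Submodule S (S ⊗[R] M)))) := by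
  rw [LocalizedModule.subsingleton_iff] at hsub ⊢
  set K : Submodule R M := Ideal.ofList fs • ⊤ with hK
  set J : Submodule S (S ⊗[R] M) := Ideal.ofList (fs.map (algebraMap R S)) • ⊤ with hJ
  have hφ : K ≤ LinearMap.ker
      ((J.mkQ.restrictScalars R) ∘ₗ ((TensorProduct.mk R S M) 1)) := by
    rw [hK]
    refine Submodule.smul_le.mpr fun r hr m _ => ?_
    simp only [LinearMap.mem_ker, LinearMap.coe_comp, LinearMap.coe_restrictScalars,
      Function.comp_apply, TensorProduct.mk_apply]
    rw [tmul_smul, ← algebraMap_smul S r ((1 : S) ⊗ₜ[R] m), Submodule.mkQ_apply,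
      Submodule.Quotient.mk_eq_zero]
    refine Submodule.smul_mem_smul ?_ Submodule.mem_top
    rw [← Ideal.map_ofList]
    exact Ideal.mem_map_of_mem _ hr
  let φ : (M ⧸ K) →ₗ[R] ((S ⊗[R] M) ⧸ J) := Submodule.liftQ K _ hφ
  let ρ : S ⊗[R] (M ⧸ K) →ₗ[S] ((S ⊗[R] M) ⧸ J) := LinearMap.liftBaseChange S φ
  have hρ : Function.Surjective ρ := by
    intro z
    obtain ⟨n, rfl⟩ := J.mkQ_surjective z
    induction n using TensorProduct.induction_on with
    | zero => exact ⟨0, map_zero _⟩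
    | tmul a m =>
      refine ⟨a ⊗ₜ Submodule.Quotient.mk m, ?_⟩
      show a • φ (Submodule.Quotient.mk m) = _
      show a • J.mkQ ((1 : S) ⊗ₜ[R] m) = _
      rw [← map_smul, smul_tmul', smul_eq_mul, mul_one]
    | add x y hx hy =>
      obtain ⟨x', hx'⟩ := hx
      obtain ⟨y', hy'⟩ := hy
      exact ⟨x' + y', by rw [map_add, hx', hy', map_add]⟩
  intro m
  obtain ⟨y, rfl⟩ := hρ m
  obtain ⟨s, hs, h0⟩ := hsub y
  exact ⟨s, hs, by rw [← map_smul, h0, map_zero]⟩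

/-- The key transfer lemma for weakly regular sequences under flat base change, at the level
of localizations. -/
lemma aux_regular (q : Ideal S) [q.IsPrime] [Module.Flat R S]
    (P : Type*) [AddCommGroup P] [Module R P] (fs : List R)
    (hreg : IsWeaklyRegular
      (LocalizedModule (q.comap (algebraMap R S)).primeCompl P)
      (fs.map (algebraMap R (Localization.AtPrime (q.comap (algebraMap R S)))))) :
    IsWeaklyRegular (LocalizedModule q.primeCompl (S ⊗[R] P))
      ((fs.map (algebraMap R S)).map (algebraMap S (Localization.AtPrime q))) := by
  haveI : Module.Flat R (Localization.AtPrime q) :=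
    Module.Flat.trans R S (Localization.AtPrime q)
  letI : Algebra (Localization.AtPrime (q.comap (algebraMap R S))) (Localization.AtPrime q) :=
    (Localization.localRingHom (q.comap (algebraMap R S)) q (algebraMap R S) rfl).toAlgebra
  letI : IsScalarTower R (Localization.AtPrime (q.comap (algebraMap R S)))
      (Localization.AtPrime q) :=
    IsScalarTower.of_algebraMap_eq fun x => by
      rw [IsScalarTower.algebraMap_apply R S (Localization.AtPrime q)]
      exact (Localization.localRingHom_to_map (q.comap (algebraMap R S)) q
        (algebraMap R S) rfl x).symm
  haveI : IsLocalizedModule (q.comap (algebraMap R S)).primeCompl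
      (LinearMap.id : Localization.AtPrime q →ₗ[R] Localization.AtPrime q) :=
    isLocalizedModule_id (q.comap (algebraMap R S)).primeCompl (Localization.AtPrime q)
      (Localization.AtPrime (q.comap (algebraMap R S)))
  letI : Module R (LocalizedModule q.primeCompl (S ⊗[R] P)) :=
    inferInstance
  letI : IsScalarTower R S (LocalizedModule q.primeCompl (S ⊗[R] P)) :=
    inferInstance
  letI : IsScalarTower R (Localization.AtPrime q) (LocalizedModule q.primeCompl (S ⊗[R] P)) :=
    IsScalarTower.of_algebraMap_smul fun r x => by
      rw [IsScalarTower.algebraMap_apply R S (Localization.AtPrime q), algebraMap_smul]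
      exact algebraMap_smul S r x
  letI : SMulCommClass S R (Localization.AtPrime q) :=
    ⟨fun s r x => by simp only [Algebra.smul_def]; ring⟩
  let eA := (IsLocalizedModule.isBaseChange (q.comap (algebraMap R S)).primeCompl
      (Localization.AtPrime (q.comap (algebraMap R S)))
      (LocalizedModule.mkLinearMap (q.comap (algebraMap R S)).primeCompl P)).equiv
  let e0 := (IsLocalizedModule.isBaseChange (q.comap (algebraMap R S)).primeCompl
      (Localization.AtPrime (q.comap (algebraMap R S)))
      (LinearMap.id : Localization.AtPrime q →ₗ[R] Localization.AtPrime q)).equiv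
  let c1 := (IsLocalizedModule.isBaseChange q.primeCompl (Localization.AtPrime q)
      (LocalizedModule.mkLinearMap q.primeCompl (S ⊗[R] P))).equiv
  let c2 := TensorProduct.AlgebraTensorModule.cancelBaseChange R S
      (Localization.AtPrime q) (Localization.AtPrime q) P
  let e : (Localization.AtPrime q) ⊗[R]
      (LocalizedModule (q.comap (algebraMap R S)).primeCompl P) ≃ₗ[R]
      LocalizedModule q.primeCompl (S ⊗[R] P) :=
    TensorProduct.congr (LinearEquiv.refl R _) (eA.restrictScalars R).symm ≪≫ₗ
    (TensorProduct.assoc R _ _ _).symm ≪≫ₗ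
    TensorProduct.congr (TensorProduct.comm R _ _ ≪≫ₗ e0.restrictScalars R)
      (LinearEquiv.refl R P) ≪≫ₗ
    (c2.restrictScalars R).symm ≪≫ₗ (c1.restrictScalars R)
  have h2 : IsWeaklyRegular
      (LocalizedModule (q.comap (algebraMap R S)).primeCompl P) fs :=
    (isWeaklyRegular_map_algebraMap_iff _ _ fs).mp hreg
  have h3 := h2.isWeaklyRegular_lTensor (M₂ := Localization.AtPrime q)
  have h4 : IsWeaklyRegular (LocalizedModule q.primeCompl (S ⊗[R] P)) fs :=
    (e.isWeaklyRegular_congr fs).mp h3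
  rw [isWeaklyRegular_map_algebraMap_iff, isWeaklyRegular_map_algebraMap_iff]
  exact h4

end Aux

/-- Base change of a regular sequence along a flat noetherian algebra:
if `f₁,…,f_r` is a regular sequence on the `R`-module `M` and `S` is a flat noetherian
`R`-algebra, then `f₁·1_S,…,f_r·1_S` is a regular sequence on the `S`-module `S ⊗[R] M`. -/
theorem isRegularSeq_baseChange
    {R : Type*} [CommRing R] [IsNoetherianRing R]
    {S : Type*} [CommRing S] [Algebra R S] [IsNoetherianRing S] [Module.Flat R S]
    {M : Type*} [AddCommGroup M] [Module R M]
    (fs : List R) (h : IsRegularSeq R M fs) :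
    IsRegularSeq S (TensorProduct R S M) (fs.map (algebraMap R S)) := by
  intro Q hQ
  let p : PrimeSpectrum R := ⟨Q.asIdeal.comap (algebraMap R S), inferInstance⟩
  have hp : p ∈ Module.support R (M ⧸ (Ideal.ofList fs • ⊤ : Submodule R M)) := by
    by_contra hc
    rw [Module.notMem_support_iff] at hc
    have h1 := aux_subsingleton (S := S) Q.asIdeal
      (M ⧸ (Ideal.ofList fs • ⊤ : Submodule R M)) hc
    have h2 := aux_support (S := S) Q.asIdeal.primeCompl fs M h1
    rw [Module.mem_support_iff] at hQ
    exact (not_subsingleton_iff_nontrivial.mpr hQ) h2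
  exact aux_regular Q.asIdeal M fs (h p hp)
end

section
/- Let R be a commutative noetherian ring, M a finitely generated R-module, and f₁,…,f_r ∈ R. If f₁,…,f_r is a regular sequence on M, then for every permutation σ of {1,…,r} the sequence f_{σ(1)},…,f_{σ(r)} is also a regular sequence on M. -/
open RingTheory.Sequence

/-- If `f₁,…,f_r` is a regular sequence on the finitely generated module `M`, then for every
permutation `σ` of `{1,…,r}` the sequence `f_{σ(1)},…,f_{σ(r)}` is also regular on `M`. -/
theorem isRegularSeq_of_perm
    {R : Type*} [CommRing R] [IsNoetherianRing R]
    {M : Type*} [AddCommGroup M] [Module R M] [Module.Finite R M]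
    {r : ℕ} (f : Fin r → R) (h : IsRegularSeq R M (List.ofFn f)) (σ : Equiv.Perm (Fin r)) :
    IsRegularSeq R M (List.ofFn (f ∘ σ)) := by
  -- the two lists are permutations of each other
  have hperm : (List.ofFn (f ∘ σ)).Perm (List.ofFn f) := σ.ofFn_comp_perm f
  -- hence they generate the same ideal
  have hI : Ideal.ofList (List.ofFn (f ∘ σ)) = Ideal.ofList (List.ofFn f) := by
    apply congrArg Ideal.span
    ext x
    exact hperm.mem_iff
  intro p hp
  have hp' : p ∈ Module.support R (M ⧸ (Ideal.ofList (List.ofFn f) • ⊤ : Submodule R M)) := by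
    rwa [hI] at hp
  have hw := h p hp'
  -- all elements of the sequence lie in `p`
  have hmem : ∀ x ∈ List.ofFn f, x ∈ p.asIdeal := by
    intro x hx
    have hann : Ideal.ofList (List.ofFn f) ≤
        Module.annihilator R (M ⧸ (Ideal.ofList (List.ofFn f) • ⊤ : Submodule R M)) := by
      intro a ha
      rw [Module.mem_annihilator]
      intro m
      obtain ⟨m, rfl⟩ := Submodule.Quotient.mk_surjective _ m
      rw [← Submodule.Quotient.mk_smul, Submodule.Quotient.mk_eq_zero]
      exact Submodule.smul_mem_smul ha trivial
    exact Module.annihilator_le_of_mem_support hp' (hann (Ideal.subset_span hx))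
  -- set up the local situation
  set Rp := Localization.AtPrime p.asIdeal
  set Mp := LocalizedModule p.asIdeal.primeCompl M
  have : Module.Finite Rp Mp :=
    Module.Finite.of_isLocalizedModule p.asIdeal.primeCompl
      (LocalizedModule.mkLinearMap p.asIdeal.primeCompl M)
  have : IsNoetherianRing Rp :=
    IsLocalization.isNoetherianRing p.asIdeal.primeCompl Rp inferInstance
  have : IsNoetherian Rp Mp := isNoetherian_of_isNoetherianRing_of_finite Rp Mp
  refine IsLocalRing.isWeaklyRegular_of_perm_of_subset_maximalIdeal hw
    (hperm.map _).symm ?_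
  intro x hx
  simp only [List.mem_map] at hx
  obtain ⟨a, ha, rfl⟩ := hx
  exact (IsLocalization.AtPrime.to_map_mem_maximal_iff Rp p.asIdeal a).mpr (hmem a ha)
end

section
/- Let R be a commutative noetherian ring, M a finitely generated R-module, and f₁,…,f_r ∈ R. Then the sequence f_{σ(1)},…,f_{σ(r)} is a strongly regular sequence on M for every permutation σ of {1,…,r} if and only if every subsequence f_{i₁},…,f_{i_s} (with 1 ≤ i₁ < ⋯ < i_s ≤ r) of f₁,…,f_r is a regular sequence on M. -/
open RingTheory.Sequence

section Aux

open Submodule IsLocalizedModule TensorProduct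
open scoped Pointwise

variable {R : Type*} [CommRing R] {M : Type*} [AddCommGroup M] [Module R M]

/-- For any list and any permutation of the indexing function producing the same multiset of
values, there is a permutation realizing the equality of lists. -/
private lemma exists_comp_perm_eq {α : Type*} : ∀ {n : ℕ} {f g : Fin n → α},
    (List.ofFn f).Perm (List.ofFn g) → ∃ σ : Equiv.Perm (Fin n), f ∘ σ = g := by
  intro n
  induction n with
  | zero => exact fun _ => ⟨1, funext fun i => i.elim0⟩
  | succ n ih =>
      intro f g hperm
      have hg0 : g 0 ∈ List.ofFn f :=
        hperm.mem_iff.mpr ((List.mem_ofFn (f := g) (a := g 0)).mpr ⟨0, rfl⟩)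
      obtain ⟨i, hi⟩ := (List.mem_ofFn (f := f) (a := g 0)).mp hg0
      let τ : Equiv.Perm (Fin (n + 1)) := Equiv.swap 0 i
      have h1 : (List.ofFn (f ∘ τ)).Perm (List.ofFn g) := (τ.ofFn_comp_perm f).trans hperm
      rw [List.ofFn_succ, List.ofFn_succ] at h1
      have e0 : (f ∘ τ) 0 = g 0 := by
        simp only [Function.comp_apply, τ, Equiv.swap_apply_left]
        exact hi
      rw [e0] at h1
      obtain ⟨σ', hσ'⟩ := ih h1.cons_inv
      refine ⟨Equiv.trans ((finSuccEquiv n).trans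
        ((Equiv.optionCongr σ').trans (finSuccEquiv n).symm)) τ, ?_⟩
      funext x
      induction x using Fin.cases with
      | zero =>
          simp only [Function.comp_apply, Equiv.trans_apply, finSuccEquiv_zero,
            Equiv.optionCongr_apply, Option.map_none, finSuccEquiv_symm_none]
          exact e0
      | succ j =>
          simp only [Function.comp_apply, Equiv.trans_apply, finSuccEquiv_succ,
            Equiv.optionCongr_apply, Option.map_some, finSuccEquiv_symm_some]
          exact congrFun hσ' j

/-- The localization of `I • ⊤` is `I • ⊤` of the localized module, as `R`-submodules. -/
private lemma localized_ideal_smul_top (t : Submonoid R) (I : Ideal R) :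
    (((I • ⊤ : Submodule R M).localized t).restrictScalars R)
      = (I • ⊤ : Submodule R (LocalizedModule t M)) := by
  apply le_antisymm
  · intro x hx
    obtain ⟨m, hm, s, rfl⟩ := (Submodule.mem_localized₀ t
      (LocalizedModule.mkLinearMap t M) (I • ⊤) x).mp hx
    clear hx
    revert s
    refine Submodule.smul_induction_on
      (p := fun m => ∀ s : t, IsLocalizedModule.mk' (LocalizedModule.mkLinearMap t M) m s ∈
        (I • ⊤ : Submodule R (LocalizedModule t M)))
      hm (fun r hr n _ s => ?_) (fun m₁ m₂ h₁ h₂ s => ?_)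
    · rw [IsLocalizedModule.mk'_smul]
      exact Submodule.smul_mem_smul hr Submodule.mem_top
    · rw [IsLocalizedModule.mk'_add]
      exact Submodule.add_mem _ (h₁ s) (h₂ s)
  · intro x hx
    refine Submodule.smul_induction_on hx (fun r hr n _ => ?_)
      (fun m₁ m₂ h₁ h₂ => Submodule.add_mem _ h₁ h₂)
    obtain ⟨⟨m, s⟩, rfl⟩ :=
      IsLocalizedModule.mk'_surjective t (LocalizedModule.mkLinearMap t M) n
    simp only [Function.uncurry_apply_pair]
    rw [← IsLocalizedModule.mk'_smul]
    exact (Submodule.mem_localized₀ t (LocalizedModule.mkLinearMap t M) (I • ⊤) _).mpr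
      ⟨r • m, Submodule.smul_mem_smul hr Submodule.mem_top, s, rfl⟩

/-- Localization commutes with quotients by `I • ⊤`. -/
private noncomputable def localizedQuotEquiv (t : Submonoid R) (I : Ideal R) :
    LocalizedModule t (M ⧸ (I • ⊤ : Submodule R M)) ≃ₗ[R]
      (LocalizedModule t M ⧸ (I • ⊤ : Submodule R (LocalizedModule t M))) :=
  (IsLocalizedModule.iso t ((I • ⊤ : Submodule R M).toLocalizedQuotient t)) ≪≫ₗ
    ((Submodule.Quotient.restrictScalarsEquiv R
      ((I • ⊤ : Submodule R M).localized t)).symm ≪≫ₗ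
        Submodule.quotEquivOfEq _ _ (localized_ideal_smul_top t I))

/-- A weakly regular sequence localizes. -/
private lemma weaklyRegular_localizedModule {rs : List R} (h : IsWeaklyRegular M rs)
    (t : Submonoid R) :
    IsWeaklyRegular (LocalizedModule t M) (rs.map (algebraMap R (Localization t))) := by
  rw [isWeaklyRegular_map_algebraMap_iff]
  have e : (Localization t) ⊗[R] M ≃ₗ[R] LocalizedModule t M :=
    ((IsLocalizedModule.isBaseChange t (Localization t)
      (LocalizedModule.mkLinearMap t M)).equiv).restrictScalars R
  exact (e.isWeaklyRegular_congr rs).mp h.isWeaklyRegular_lTensor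

private lemma mem_ofList_annihilator {l : List R} {a : R} (ha : a ∈ l) :
    a ∈ Module.annihilator R (M ⧸ (Ideal.ofList l • ⊤ : Submodule R M)) := by
  rw [Module.mem_annihilator]
  intro m
  obtain ⟨x, rfl⟩ := Submodule.Quotient.mk_surjective _ m
  rw [← Submodule.Quotient.mk_smul, Submodule.Quotient.mk_eq_zero]
  exact Submodule.smul_mem_smul (Ideal.subset_span ha) trivial

/-- Over a noetherian ring with `M` finite, the paper's notion of regular sequence is invariant
under permutations. -/
private lemma IsRegularSeq.of_perm [IsNoetherianRing R] [Module.Finite R M] {l l' : List R}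
    (h : IsRegularSeq R M l) (hp : l.Perm l') : IsRegularSeq R M l' := by
  have hI : Ideal.ofList l' = Ideal.ofList l :=
    congrArg Ideal.span (Set.ext fun x => hp.symm.mem_iff)
  intro p hsupp
  rw [hI] at hsupp
  haveI := Module.Finite.of_isLocalizedModule p.asIdeal.primeCompl
    (Rₚ := Localization.AtPrime p.asIdeal) (LocalizedModule.mkLinearMap p.asIdeal.primeCompl M)
  haveI : IsNoetherianRing (Localization.AtPrime p.asIdeal) :=
    IsLocalization.isNoetherianRing p.asIdeal.primeCompl _ ‹_›
  refine IsLocalRing.isWeaklyRegular_of_perm_of_subset_maximalIdeal (h p hsupp)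
    (hp.map _) ?_
  rintro x hx
  obtain ⟨a, ha, rfl⟩ := List.mem_map.mp hx
  rw [IsLocalization.AtPrime.to_map_mem_maximal_iff _ p.asIdeal]
  exact Module.annihilator_le_of_mem_support hsupp (mem_ofList_annihilator ha)

/-- Local-global principle for nonzerodivisors: it suffices to check injectivity of `a • ·`
at the primes of the support of `M/aM`. -/
private lemma isSMulRegular_of_local [Module.Finite R M] (a : R)
    (h : ∀ p ∈ Module.support R (M ⧸ (Ideal.span {a} • ⊤ : Submodule R M)),
      IsSMulRegular (LocalizedModule p.asIdeal.primeCompl M)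
        (algebraMap R (Localization.AtPrime p.asIdeal) a)) :
    IsSMulRegular M a := by
  have key : ∀ x : M, a • x = 0 → x = 0 := by
    intro x hx
    by_contra hx0
    have h1 : (Submodule.span R {x}).annihilator ≠ ⊤ := by
      intro hJ
      have h1mem : (1 : R) ∈ (Submodule.span R {x}).annihilator := by
        rw [hJ]; exact Submodule.mem_top
      exact hx0 (by simpa using (Submodule.mem_annihilator_span_singleton x 1).mp h1mem)
    obtain ⟨m, hm, hJm⟩ := Ideal.exists_le_maximal _ h1
    let P : PrimeSpectrum R := ⟨m, hm.isPrime⟩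
    have hreg : IsSMulRegular (LocalizedModule P.asIdeal.primeCompl M) a := by
      by_cases hp : P ∈ Module.support R (M ⧸ (Ideal.span {a} • ⊤ : Submodule R M))
      · exact (isSMulRegular_algebraMap_iff (M := LocalizedModule P.asIdeal.primeCompl M)
          (A := Localization.AtPrime P.asIdeal) (r := a)).mp (h P hp)
      · rw [Module.notMem_support_iff] at hp
        have hsub : Subsingleton ((LocalizedModule P.asIdeal.primeCompl M) ⧸
            (Ideal.span {a} • ⊤ : Submodule R (LocalizedModule P.asIdeal.primeCompl M))) :=
          (localizedQuotEquiv P.asIdeal.primeCompl (Ideal.span {a})).symm.toEquiv.subsingleton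
        have htop : (Ideal.span {a} • ⊤ :
            Submodule R (LocalizedModule P.asIdeal.primeCompl M)) = ⊤ :=
          Submodule.Quotient.subsingleton_iff.mp hsub
        have hsurj : Function.Surjective
            (fun x : LocalizedModule P.asIdeal.primeCompl M => a • x) := by
          intro y
          have hy : y ∈ (Ideal.span {a} • ⊤ :
              Submodule R (LocalizedModule P.asIdeal.primeCompl M)) := by
            rw [htop]; exact Submodule.mem_top
          rw [Submodule.ideal_span_singleton_smul] at hy
          have hy' : y ∈ a • ((⊤ : Submodule R (LocalizedModule P.asIdeal.primeCompl M)) :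
              Set (LocalizedModule P.asIdeal.primeCompl M)) := by
            rwa [← Submodule.coe_pointwise_smul]
          obtain ⟨x, -, rfl⟩ := Set.mem_smul_set.mp hy'
          exact ⟨x, rfl⟩
        haveI := Module.Finite.of_isLocalizedModule P.asIdeal.primeCompl
          (Rₚ := Localization.AtPrime P.asIdeal)
          (LocalizedModule.mkLinearMap P.asIdeal.primeCompl M)
        have hinj := OrzechProperty.injective_of_surjective_endomorphism
          (LinearMap.lsmul (Localization.AtPrime P.asIdeal)
            (LocalizedModule P.asIdeal.primeCompl M)
            (algebraMap R (Localization.AtPrime P.asIdeal) a))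
          (by
            intro y
            obtain ⟨x, hx⟩ := hsurj y
            exact ⟨x, by simpa [LinearMap.lsmul_apply, algebraMap_smul] using hx⟩)
        exact (isSMulRegular_algebraMap_iff (M := LocalizedModule P.asIdeal.primeCompl M)
          (A := Localization.AtPrime P.asIdeal) (r := a)).mp hinj
    have h0 : (LocalizedModule.mk x (1 : P.asIdeal.primeCompl)) = 0 := by
      apply hreg
      show a • LocalizedModule.mk x (1 : P.asIdeal.primeCompl) = a • 0
      rw [smul_zero, LocalizedModule.smul'_mk, hx, LocalizedModule.zero_mk]
    rw [show (0 : LocalizedModule P.asIdeal.primeCompl M) = LocalizedModule.mk 0 1 from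
      (LocalizedModule.zero_mk _).symm, LocalizedModule.mk_eq] at h0
    obtain ⟨u, hu⟩ := h0
    simp only [one_smul, smul_zero] at hu
    exact u.2 (hJm ((Submodule.mem_annihilator_span_singleton x (u : R)).mpr hu))
  intro x y hxy
  have hxy' : a • x = a • y := hxy
  have : a • (x - y) = 0 := by rw [smul_sub, hxy', sub_self]
  exact sub_eq_zero.mp (key _ this)

/-- If all prefixes of `rs` are regular sequences on `M` in the paper's sense, then `rs` is
strongly regular on `M`. -/
private lemma isWeaklyRegular_of_prefixes [IsNoetherianRing R] [Module.Finite R M] (rs : List R)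
    (H : ∀ n : ℕ, IsRegularSeq R M (rs.take n)) : IsWeaklyRegular M rs := by
  rw [isWeaklyRegular_iff]
  intro i hi
  apply isSMulRegular_of_local
  intro p hp
  have hofl : Ideal.ofList (rs.take (i + 1)) = Ideal.ofList (rs[i] :: rs.take i) := by
    refine congrArg Ideal.span (Set.ext fun x => ?_)
    rw [← List.take_concat_get' rs i hi]
    simp only [Set.mem_setOf_eq, List.mem_append, List.mem_singleton, List.mem_cons]
    tauto
  have e2 : (M ⧸ (Ideal.ofList (rs.take (i + 1)) • ⊤ : Submodule R M)) ≃ₗ[R]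
      ((M ⧸ (Ideal.ofList (rs.take i) • ⊤ : Submodule R M)) ⧸
        (Ideal.span {rs[i]} • ⊤ :
          Submodule R (M ⧸ (Ideal.ofList (rs.take i) • ⊤ : Submodule R M)))) :=
    Submodule.quotEquivOfEq _ _ (by rw [hofl]) ≪≫ₗ
      Submodule.quotOfListConsSMulTopEquivQuotSMulTopOuter M rs[i] (rs.take i) ≪≫ₗ
      Submodule.quotEquivOfEq _ _ (Submodule.ideal_span_singleton_smul rs[i] ⊤).symm
  have hp' : p ∈ Module.support R
      (M ⧸ (Ideal.ofList (rs.take (i + 1)) • ⊤ : Submodule R M)) := by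
    rw [e2.support_eq]
    exact hp
  have h1 := H (i + 1) p hp'
  rw [isWeaklyRegular_map_algebraMap_iff, ← List.take_concat_get' rs i hi] at h1
  have h2 := ((isWeaklyRegular_append_iff _ _ _).mp h1).2
  rw [isWeaklyRegular_singleton_iff] at h2
  have h3 : IsSMulRegular
      (LocalizedModule p.asIdeal.primeCompl
        (M ⧸ (Ideal.ofList (rs.take i) • ⊤ : Submodule R M))) rs[i] :=
    ((localizedQuotEquiv p.asIdeal.primeCompl
      (Ideal.ofList (rs.take i))).isSMulRegular_congr rs[i]).mpr h2
  exact (isSMulRegular_algebraMap_iff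
    (M := LocalizedModule p.asIdeal.primeCompl
      (M ⧸ (Ideal.ofList (rs.take i) • ⊤ : Submodule R M)))
    (A := Localization.AtPrime p.asIdeal) (r := rs[i])).mpr h3

end Aux

/-- The sequence `f_{σ(1)},…,f_{σ(r)}` is strongly regular on the finitely generated module `M`
for every permutation `σ` of `{1,…,r}` iff every subsequence of `f₁,…,f_r` is regular on `M`. -/
theorem forall_perm_strongly_regular_iff_forall_sublist_regular
    {R : Type*} [CommRing R] [IsNoetherianRing R]
    {M : Type*} [AddCommGroup M] [Module R M] [Module.Finite R M]
    {r : ℕ} (f : Fin r → R) :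
    (∀ σ : Equiv.Perm (Fin r), IsWeaklyRegular M (List.ofFn (f ∘ σ))) ↔
      ∀ l : List R, l.Sublist (List.ofFn f) → IsRegularSeq R M l := by
  constructor
  · intro h l hl
    obtain ⟨c, hperm⟩ := hl.exists_perm_append
    have hlen : (l ++ c).length = r := by
      rw [← hperm.length_eq, List.length_ofFn]
    subst hlen
    obtain ⟨σ, hσ⟩ := exists_comp_perm_eq (f := f) (g := (l ++ c).get)
      (by rwa [List.ofFn_get])
    have hw := h σ
    rw [show f ∘ σ = (l ++ c).get from hσ, List.ofFn_get] at hw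
    have hl' := ((isWeaklyRegular_append_iff M l c).mp hw).1
    intro p _
    exact weaklyRegular_localizedModule hl' _
  · intro H σ
    apply isWeaklyRegular_of_prefixes
    intro n
    have hsub : ((List.ofFn (f ∘ σ)).take n).Subperm (List.ofFn f) :=
      (List.take_sublist n _).subperm.trans (σ.ofFn_comp_perm f).subperm
    obtain ⟨t, htp, hts⟩ := hsub
    exact (H t hts).of_perm htp
end

section
/- (Corollary 2, ring case) Let R be a commutative noetherian ring and f₁,…,f_r, g₁,…,g_r ∈ R. Suppose V(g₁,…,g_r) ⊆ V(f₁,…,f_r) in Spec R. If f₁,…,f_r is a regular sequence in R (i.e. on the R-module R), then g₁,…,g_r is also a regular sequence in R. -/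
open RingTheory.Sequence Submodule IsLocalRing
open scoped Pointwise

section AssFinite

variable {R : Type*} [CommRing R] {M : Type*} [AddCommGroup M] [Module R M]

lemma IsAssociatedPrime.submodule_or_quotient [IsNoetherianRing R] (N : Submodule R M) {p : Ideal R}
    (hp : IsAssociatedPrime p M) :
    IsAssociatedPrime p N ∨ IsAssociatedPrime p (M ⧸ N) := by
  obtain ⟨hp1, x, hx⟩ := isAssociatedPrime_iff.mp hp
  by_cases h : ∃ r : R, r • x ∈ N ∧ r • x ≠ 0
  · obtain ⟨r, hrN, hr0⟩ := h
    have hrp : r ∉ p := by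
      intro hr
      rw [hx, Submodule.mem_colon_singleton, Submodule.mem_bot] at hr
      exact hr0 hr
    left
    refine isAssociatedPrime_iff.mpr ⟨hp1, ⟨r • x, hrN⟩, ?_⟩
    ext s
    rw [Submodule.mem_colon_singleton, Submodule.mem_bot]
    have : (s • (⟨r • x, hrN⟩ : N) = 0) ↔ s • (r • x) = 0 := by
      rw [Subtype.ext_iff]; rfl
    rw [this, smul_smul]
    have hmem : ∀ t : R, t • x = 0 ↔ t ∈ p := by
      intro t
      rw [hx, Submodule.mem_colon_singleton, Submodule.mem_bot]
    rw [hmem (s * r)]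
    constructor
    · intro hs
      exact p.mul_mem_right r hs
    · intro hs
      rcases hp1.mem_or_mem hs with h' | h'
      · exact h'
      · exact absurd h' hrp
  · push_neg at h
    right
    refine isAssociatedPrime_iff.mpr ⟨hp1, Submodule.Quotient.mk x, ?_⟩
    ext s
    rw [Submodule.mem_colon_singleton, Submodule.mem_bot, ← Submodule.Quotient.mk_smul,
      Submodule.Quotient.mk_eq_zero]
    constructor
    · intro hs
      have : s • x = 0 := by
        rw [hx, Submodule.mem_colon_singleton, Submodule.mem_bot] at hs; exact hs
      rw [this]; exact N.zero_mem
    · intro hs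
      have := h s hs
      rw [hx, Submodule.mem_colon_singleton, Submodule.mem_bot]
      exact this

lemma associatedPrimes_finite (R M : Type*) [CommRing R] [IsNoetherianRing R] [AddCommGroup M]
    [Module R M] [IsNoetherian R M] : (associatedPrimes R M).Finite := by
  have key : ∀ N : Submodule R M, (associatedPrimes R (M ⧸ N)).Finite := by
    intro N
    induction N using IsNoetherian.induction with
    | _ N IH =>
    rcases subsingleton_or_nontrivial (M ⧸ N) with hs | hs
    · rw [associatedPrimes.eq_empty_of_subsingleton]; exact Set.finite_empty
    · obtain ⟨p, hp⟩ := associatedPrimes.nonempty R (M ⧸ N)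
      obtain ⟨hp1, x, hx⟩ := isAssociatedPrime_iff.mp hp
      have hx0 : x ≠ 0 := by
        rintro rfl
        apply hp1.ne_top
        rw [hx, Submodule.colon_singleton_zero]
      set K : Submodule R (M ⧸ N) := R ∙ x with hK
      set N' : Submodule R M := K.comap N.mkQ with hN'
      have hNN' : N < N' := by
        constructor
        · intro n hn
          have : N.mkQ n = 0 := by
            rw [Submodule.mkQ_apply, Submodule.Quotient.mk_eq_zero]; exact hn
          show n ∈ N'
          rw [hN', Submodule.mem_comap, this]
          exact K.zero_mem
        · intro hle
          obtain ⟨y, hy⟩ := N.mkQ_surjective x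
          have hyN' : y ∈ N' := by
            rw [hN', Submodule.mem_comap, hy]
            exact Submodule.mem_span_singleton_self x
          have hyN : y ∈ N := hle hyN'
          apply hx0
          rw [← hy, Submodule.mkQ_apply, Submodule.Quotient.mk_eq_zero]
          exact hyN
      -- Ass K = {p}
      have hKass : associatedPrimes R K ⊆ {p} := by
        have f := LinearMap.toSpanSingleton R (M ⧸ N) x
        have hker : LinearMap.ker (LinearMap.toSpanSingleton R (M ⧸ N) x) = p := by
          ext s
          rw [LinearMap.mem_ker, LinearMap.toSpanSingleton_apply, hx,
            Submodule.mem_colon_singleton, Submodule.mem_bot]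
        have hrange : LinearMap.range (LinearMap.toSpanSingleton R (M ⧸ N) x) = K :=
          (LinearMap.span_singleton_eq_range R (M ⧸ N) x).symm
        have e : (R ⧸ p) ≃ₗ[R] K := by
          refine (Submodule.quotEquivOfEq _ _ hker.symm) ≪≫ₗ
            ((LinearMap.toSpanSingleton R (M ⧸ N) x).quotKerEquivRange ≪≫ₗ
              (LinearEquiv.ofEq _ _ hrange))
        rw [← LinearEquiv.AssociatedPrimes.eq e,
          associatedPrimes.eq_singleton_of_isPrimary hp1.isPrimary, hp1.radical]
      have hQass : associatedPrimes R ((M ⧸ N) ⧸ K) = associatedPrimes R (M ⧸ N') := by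
        have hmap : N'.map N.mkQ = K := by
          rw [hN', Submodule.map_comap_eq, Submodule.range_mkQ, top_inf_eq]
        have e : ((M ⧸ N) ⧸ N'.map N.mkQ) ≃ₗ[R] M ⧸ N' :=
          Submodule.quotientQuotientEquivQuotient N N' hNN'.le
        rw [← hmap]
        exact LinearEquiv.AssociatedPrimes.eq e
      have hsub : associatedPrimes R (M ⧸ N) ⊆
          associatedPrimes R K ∪ associatedPrimes R ((M ⧸ N) ⧸ K) := by
        intro q hq
        exact hq.submodule_or_quotient K
      refine Set.Finite.subset ?_ hsub
      refine Set.Finite.union (Set.Finite.subset (Set.finite_singleton p) hKass) ?_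
      rw [hQass]
      exact IH N' hNN'
  have e : (M ⧸ (⊥ : Submodule R M)) ≃ₗ[R] M := Submodule.quotEquivOfEqBot ⊥ rfl
  rw [← LinearEquiv.AssociatedPrimes.eq e]
  exact key ⊥

end AssFinite


section Avoidance

variable {R : Type*} [CommRing R]

/-- Plain prime avoidance: if an ideal is not contained in any of finitely many primes,
it has an element avoiding all of them. -/
lemma exists_mem_forall_not_mem_of_forall_not_le {s : Finset (Ideal R)}
    (hs : ∀ q ∈ s, q.IsPrime) {I : Ideal R} (h : ∀ q ∈ s, ¬ I ≤ q) :
    ∃ z ∈ I, ∀ q ∈ s, z ∉ q := by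
  classical
  rcases s.eq_empty_or_nonempty with rfl | ⟨a, ha⟩
  · exact ⟨0, I.zero_mem, by simp⟩
  by_contra hc
  push_neg at hc
  have hsub : (I : Set R) ⊆ ⋃ q ∈ (s : Set (Ideal R)), (q : Set R) := by
    intro z hz
    obtain ⟨q, hq, hzq⟩ := hc z hz
    exact Set.mem_biUnion hq hzq
  rw [Ideal.subset_union_prime a a (fun i hi _ _ => hs i hi)] at hsub
  obtain ⟨q, hq, hle⟩ := hsub
  exact h q hq hle

/-- Helper: an element inside all ideals of a finite family, outside a prime not containing
any of them. -/
lemma exists_mem_all_not_mem_prime (q0 : Ideal R) (hq0 : q0.IsPrime)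
    (s : Finset (Ideal R)) (h : ∀ q ∈ s, ∃ c ∈ q, c ∉ q0) :
    ∃ c, (∀ q ∈ s, c ∈ q) ∧ c ∉ q0 := by
  classical
  induction s using Finset.induction with
  | empty => exact ⟨1, by simp, fun h1 => hq0.ne_top (q0.eq_top_of_isUnit_mem h1 isUnit_one)⟩
  | insert _ _ hq ih =>
    rename_i a t
    obtain ⟨c, hc, hc0⟩ := ih (fun q hq => h q (Finset.mem_insert_of_mem hq))
    obtain ⟨d, hd, hd0⟩ := h a (Finset.mem_insert_self a t)
    refine ⟨d * c, ?_, fun hm => ?_⟩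
    · intro q hmem
      rcases Finset.mem_insert.mp hmem with rfl | hmem
      · exact q.mul_mem_right c hd
      · exact q.mul_mem_left d (hc q hmem)
    · rcases hq0.mem_or_mem hm with h' | h'
      · exact hd0 h'
      · exact hc0 h'

private lemma coset_avoid_aux (n : ℕ) :
    ∀ (s : Finset (Ideal R)), s.card = n → ∀ (hs : ∀ q ∈ s, q.IsPrime) (J : Ideal R) (a : R),
    (∀ q ∈ s, ¬ (Ideal.span {a} ⊔ J ≤ q)) → ∃ j ∈ J, ∀ q ∈ s, a + j ∉ q := by
  classical
  induction n using Nat.strong_induction_on with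
  | _ n IH =>
  intro s hcard hs J a h
  rcases s.eq_empty_or_nonempty with rfl | hne
  · exact ⟨0, J.zero_mem, by simp⟩
  obtain ⟨q0, hq0s, hq0min⟩ : ∃ q0 ∈ (s : Set (Ideal R)), ∀ q ∈ (s : Set (Ideal R)),
      q ≤ q0 → q0 = q := by
    obtain ⟨m, hm⟩ := (s.finite_toSet).exists_minimal (by exact_mod_cast hne)
    exact ⟨m, hm.prop, fun q hq hle => (hm.eq_of_le hq hle).symm⟩
  simp only [Finset.mem_coe] at hq0s
  have hcard' : (s.erase q0).card < n := hcard ▸ Finset.card_erase_lt_of_mem hq0s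
  obtain ⟨j, hjJ, hj⟩ := IH _ hcard' (s.erase q0) rfl
    (fun q hq => hs q (Finset.mem_of_mem_erase hq)) J a
    (fun q hq => h q (Finset.mem_of_mem_erase hq))
  by_cases hq0 : a + j ∈ q0
  · have hq0p := hs q0 hq0s
    have hJq0 : ¬ J ≤ q0 := by
      intro hle
      apply h q0 hq0s
      rw [sup_le_iff]
      refine ⟨?_, hle⟩
      rw [Ideal.span_le, Set.singleton_subset_iff]
      have : a = (a + j) - j := by ring
      rw [this]
      exact q0.sub_mem hq0 (hle hjJ)
    obtain ⟨b, hbJ, hbq0⟩ := SetLike.not_le_iff_exists.mp hJq0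
    obtain ⟨c, hc, hcq0⟩ := exists_mem_all_not_mem_prime q0 hq0p (s.erase q0) (by
      intro q hq
      have hqs := Finset.mem_of_mem_erase hq
      have hne' := (Finset.mem_erase.mp hq).1
      have : ¬ q ≤ q0 := fun hle => hne' ((hq0min q (by exact_mod_cast hqs) hle).symm)
      obtain ⟨c, hcq, hcq0⟩ := SetLike.not_le_iff_exists.mp this
      exact ⟨c, hcq, hcq0⟩)
    refine ⟨j + c * b, J.add_mem hjJ (J.mul_mem_left c hbJ), ?_⟩
    intro q hq
    rcases eq_or_ne q q0 with rfl | hne'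
    · intro hmem
      have : c * b ∈ q := by
        have : c * b = (a + (j + c * b)) - (a + j) := by ring
        rw [this]
        exact q.sub_mem hmem hq0
      rcases hq0p.mem_or_mem this with h' | h'
      · exact hcq0 h'
      · exact hbq0 h'
    · have hq' : q ∈ s.erase q0 := Finset.mem_erase.mpr ⟨hne', hq⟩
      intro hmem
      apply hj q hq'
      have : a + j = (a + (j + c * b)) - c * b := by ring
      rw [this]
      exact q.sub_mem hmem (q.mul_mem_right b (hc q hq'))
  · refine ⟨j, hjJ, ?_⟩
    intro q hq
    rcases eq_or_ne q q0 with rfl | hne'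
    · exact hq0
    · exact hj q (Finset.mem_erase.mpr ⟨hne', hq⟩)

/-- Coset prime avoidance. -/
lemma exists_add_mem_forall_not_mem {s : Finset (Ideal R)}
    (hs : ∀ q ∈ s, q.IsPrime) (J : Ideal R) (a : R)
    (h : ∀ q ∈ s, ¬ (Ideal.span {a} ⊔ J ≤ q)) :
    ∃ j ∈ J, ∀ q ∈ s, a + j ∉ q :=
  coset_avoid_aux s.card s rfl hs J a h

end Avoidance


open RingTheory.Sequence Submodule
open scoped Pointwise

section Small

variable {R : Type*} [CommRing R] {M : Type*} [AddCommGroup M] [Module R M]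

lemma isWeaklyRegular_of_subsingleton [Subsingleton M] (rs : List R) :
    IsWeaklyRegular M rs := by
  constructor
  intro i h
  haveI : Subsingleton (M ⧸ (Ideal.ofList (rs.take i) • ⊤ : Submodule R M)) :=
    (Submodule.mkQ_surjective _).subsingleton
  exact fun a b _ => Subsingleton.elim a b

lemma IsAssociatedPrime.not_isSMulRegular [IsNoetherianRing R] {q : Ideal R} (hq : IsAssociatedPrime q M)
    {r : R} (hr : r ∈ q) : ¬ IsSMulRegular M r := by
  obtain ⟨hq1, x, hx⟩ := isAssociatedPrime_iff.mp hq
  intro hreg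
  have hx0 : x ≠ 0 := by
    rintro rfl
    apply hq1.ne_top
    rw [hx, Submodule.colon_singleton_zero]
  rw [hx, Submodule.mem_colon_singleton, Submodule.mem_bot] at hr
  exact hx0 (hreg (show r • x = r • 0 by rw [hr, smul_zero]))

lemma mem_smul_top_iff_exists (r : R) (m : M) :
    m ∈ r • (⊤ : Submodule R M) ↔ ∃ n : M, r • n = m := by
  constructor
  · intro h
    rw [← SetLike.mem_coe, Submodule.coe_pointwise_smul, Set.mem_smul_set] at h
    obtain ⟨n, -, hn⟩ := h
    exact ⟨n, hn⟩
  · rintro ⟨n, rfl⟩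
    exact Submodule.smul_mem_pointwise_smul n r ⊤ trivial

/-- Kaplansky's exchange lemma. -/
lemma isAssociatedPrime_quotSMulTop_not_mem_mem [IsNoetherianRing R] {y a b : R}
    (hy : IsSMulRegular M y) (ha : IsSMulRegular M a)
    (hb : IsSMulRegular (QuotSMulTop a M) b) {q : Ideal R}
    (hq : IsAssociatedPrime q (QuotSMulTop y M)) (haq : a ∈ q) (hbq : b ∈ q) : False := by
  obtain ⟨hq1, x, hx⟩ := isAssociatedPrime_iff.mp hq
  obtain ⟨m, rfl⟩ := Submodule.mkQ_surjective _ x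
  have hx0 : (Submodule.mkQ (y • ⊤ : Submodule R M)) m ≠ 0 := by
    rintro h
    apply hq1.ne_top
    rw [hx, h, Submodule.colon_singleton_zero]
  have hmem : ∀ t : R, t ∈ q → ∃ n : M, y • n = t • m := by
    intro t ht
    rw [hx, Submodule.mem_colon_singleton, Submodule.mem_bot] at ht
    have h0 : Submodule.Quotient.mk (p := (y • ⊤ : Submodule R M)) (t • m) = 0 := by
      rw [Submodule.Quotient.mk_smul]
      exact ht
    rw [Submodule.Quotient.mk_eq_zero] at h0
    exact (mem_smul_top_iff_exists y (t • m)).mp h0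
  obtain ⟨m₁, hm₁⟩ := hmem a haq
  obtain ⟨m₂, hm₂⟩ := hmem b hbq
  have key : a • m₂ = b • m₁ := by
    apply hy
    show y • (a • m₂) = y • (b • m₁)
    rw [smul_comm y a, hm₂, smul_comm y b, hm₁, smul_comm a b]
  have h1 : Submodule.Quotient.mk (p := (a • ⊤ : Submodule R M)) (b • m₁) = 0 := by
    rw [← key, Submodule.Quotient.mk_eq_zero]
    exact (mem_smul_top_iff_exists a _).mpr ⟨m₂, rfl⟩
  have h2 : b • (Submodule.Quotient.mk (p := (a • ⊤ : Submodule R M)) m₁) = b • 0 := by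
    rw [smul_zero, ← Submodule.Quotient.mk_smul]
    exact h1
  have hm₁a : m₁ ∈ a • (⊤ : Submodule R M) := (Submodule.Quotient.mk_eq_zero _).mp (hb h2)
  obtain ⟨m₃, hm₃⟩ := (mem_smul_top_iff_exists a m₁).mp hm₁a
  have ham : a • (y • m₃) = a • m := by rw [smul_comm, hm₃, hm₁]
  apply hx0
  rw [Submodule.mkQ_apply, Submodule.Quotient.mk_eq_zero]
  exact (mem_smul_top_iff_exists y m).mpr ⟨m₃, ha ham⟩

end Small


open RingTheory.Sequence Submodule IsLocalRing
open scoped Pointwise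

section Comm

variable {R : Type*} [CommRing R] (M : Type*) [AddCommGroup M] [Module R M]

/-- Commuting two successive `QuotSMulTop`s. -/
noncomputable def quotSMulTopComm (a b : R) :
    QuotSMulTop a (QuotSMulTop b M) ≃ₗ[R] QuotSMulTop b (QuotSMulTop a M) :=
  (Submodule.quotEquivOfEq _ _
      (by rw [Submodule.map_pointwise_smul, Submodule.map_top, Submodule.range_mkQ])) ≪≫ₗ
    (Submodule.quotientQuotientEquivQuotientSup (b • ⊤) (a • ⊤)) ≪≫ₗ
    (Submodule.quotEquivOfEq _ _ (sup_comm _ _)) ≪≫ₗ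
    (Submodule.quotientQuotientEquivQuotientSup (a • ⊤) (b • ⊤)).symm ≪≫ₗ
    (Submodule.quotEquivOfEq _ _
      (by rw [Submodule.map_pointwise_smul, Submodule.map_top, Submodule.range_mkQ])).symm

end Comm

section RegOfAvoid

variable {R : Type*} [CommRing R] [IsNoetherianRing R] {M : Type*} [AddCommGroup M] [Module R M]

lemma isSMulRegular_of_forall_assoc {z : R}
    (h : ∀ q ∈ associatedPrimes R M, z ∉ q) : IsSMulRegular M z := by
  by_contra hc
  have heq := biUnion_associatedPrimes_eq_compl_regular R (M := M)
  have hz : z ∈ ({r : R | IsSMulRegular M r}ᶜ : Set R) := hc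
  rw [← heq] at hz
  simp only [Set.mem_iUnion, SetLike.mem_coe, exists_prop] at hz
  obtain ⟨q, hq, hzq⟩ := hz
  exact h q hq hzq

end RegOfAvoid

section Grade

universe u v

/-- Kaplansky-style lemma: if an ideal `I` of a noetherian local ring contains, up to radical,
a weakly regular sequence of length `n` on `M`, and `h ∈ I` is regular on `M`, then `I`
contains a weakly regular sequence of length `n - 1` on `M ⧸ hM`. -/
lemma grade_descend {R : Type u} [CommRing R] [IsLocalRing R] [IsNoetherianRing R] :
    ∀ (n : ℕ) (M : Type v) [AddCommGroup M] [Module R M] [Module.Finite R M]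
      (I : Ideal R), I ≤ maximalIdeal R → ∀ (xs : List R),
      (∀ x ∈ xs, x ∈ I.radical) → IsWeaklyRegular M xs → xs.length = n →
      ∀ (h : R), h ∈ I → IsSMulRegular M h →
      ∃ zs : List R, zs.length = n - 1 ∧ (∀ z ∈ zs, z ∈ I) ∧
        IsWeaklyRegular (QuotSMulTop h M) zs := by
  intro n
  induction n using Nat.strong_induction_on with
  | _ n IH =>
  intro M _ _ _ I hIm xs hxs hreg hlen h hhI hregh
  match n with
  | 0 => exact ⟨[], rfl, by simp, IsWeaklyRegular.nil R _⟩
  | 1 => exact ⟨[], rfl, by simp, IsWeaklyRegular.nil R _⟩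
  | (m + 2) =>
    match xs, hlen with
    | x₁ :: x₂ :: rest, hlen =>
    rw [isWeaklyRegular_cons_iff] at hreg
    obtain ⟨hx₁, hreg'⟩ := hreg
    rw [isWeaklyRegular_cons_iff] at hreg'
    obtain ⟨hx₂, hrest⟩ := hreg'
    have hx₁r : x₁ ∈ I.radical := hxs x₁ (by simp)
    have hx₂r : x₂ ∈ I.radical := hxs x₂ (by simp)
    rcases subsingleton_or_nontrivial (QuotSMulTop h M) with hsub | hnt
    · exact ⟨List.replicate (m + 1) h, by simp, by
        intro z hz
        rw [List.eq_of_mem_replicate hz]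
        exact hhI, isWeaklyRegular_of_subsingleton _⟩
    -- associated primes of the two quotients avoid I
    have hfin1 : (associatedPrimes R (QuotSMulTop h M)).Finite := associatedPrimes_finite R _
    have hfin2 : (associatedPrimes R (QuotSMulTop x₁ M)).Finite := associatedPrimes_finite R _
    have hIq1 : ∀ q ∈ associatedPrimes R (QuotSMulTop h M), ¬ I ≤ q := by
      intro q hq hle
      have hrad : I.radical ≤ q := by
        have := Ideal.radical_mono hle
        rwa [hq.isPrime.radical] at this
      exact isAssociatedPrime_quotSMulTop_not_mem_mem hregh hx₁ hx₂ hq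
        (hrad hx₁r) (hrad hx₂r)
    have hIq2 : ∀ q ∈ associatedPrimes R (QuotSMulTop x₁ M), ¬ I ≤ q := by
      intro q hq hle
      have hrad : I.radical ≤ q := by
        have := Ideal.radical_mono hle
        rwa [hq.isPrime.radical] at this
      exact hq.not_isSMulRegular (hrad hx₂r) hx₂
    classical
    set s : Finset (Ideal R) := (hfin1.union hfin2).toFinset with hs_def
    have hmem_s : ∀ q, q ∈ s ↔ q ∈ associatedPrimes R (QuotSMulTop h M) ∪
        associatedPrimes R (QuotSMulTop x₁ M) := fun q => Set.Finite.mem_toFinset _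
    obtain ⟨z, hzI, hz⟩ := exists_mem_forall_not_mem_of_forall_not_le
      (s := s) (fun q hq => by
        rcases (hmem_s q).mp hq with h' | h'
        · exact h'.isPrime
        · exact h'.isPrime)
      (I := I) (fun q hq => by
        rcases (hmem_s q).mp hq with h' | h'
        · exact hIq1 q h'
        · exact hIq2 q h')
    have hzQh : IsSMulRegular (QuotSMulTop h M) z :=
      isSMulRegular_of_forall_assoc (fun q hq => hz q ((hmem_s q).mpr (Or.inl hq)))
    have hzQx₁ : IsSMulRegular (QuotSMulTop x₁ M) z :=
      isSMulRegular_of_forall_assoc (fun q hq => hz q ((hmem_s q).mpr (Or.inr hq)))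
    -- memberships in the maximal ideal
    have hradm : I.radical ≤ maximalIdeal R := by
      have := Ideal.radical_mono hIm
      rwa [(IsLocalRing.maximalIdeal.isMaximal R).isPrime.radical] at this
    have hzm : z ∈ maximalIdeal R := hIm hzI
    have hhm : h ∈ maximalIdeal R := hIm hhI
    -- [h, z] weakly regular hence [z, h] weakly regular
    have hhz : IsWeaklyRegular M [h, z] :=
      IsWeaklyRegular.cons hregh (by rw [isWeaklyRegular_singleton_iff]; exact hzQh)
    have hzh : IsWeaklyRegular M [z, h] := by
      refine IsLocalRing.isWeaklyRegular_of_perm_of_subset_maximalIdeal hhz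
        (List.Perm.swap z h []) ?_
      intro r hr
      simp only [List.mem_cons, List.not_mem_nil, or_false] at hr
      rcases hr with rfl | rfl
      · exact hhm
      · exact hzm
    rw [isWeaklyRegular_cons_iff, isWeaklyRegular_singleton_iff] at hzh
    obtain ⟨hzM, hhQz⟩ := hzh
    -- first application of the induction hypothesis, on M ⧸ x₁ M
    obtain ⟨ws, hwslen, hwsI, hwsreg⟩ := IH (m + 1) (by omega) (QuotSMulTop x₁ M) I hIm
      (x₂ :: rest) (fun x hx => hxs x (by simp [hx]))
      (by rw [isWeaklyRegular_cons_iff]; exact ⟨hx₂, hrest⟩)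
      (by simpa using hlen) z hzI hzQx₁
    simp only [Nat.add_sub_cancel] at hwslen
    -- x₁ :: z :: ws is weakly regular on M; permute to z :: x₁ :: ws
    have hfull : IsWeaklyRegular M (x₁ :: z :: ws) :=
      IsWeaklyRegular.cons hx₁ (IsWeaklyRegular.cons hzQx₁ hwsreg)
    have hfull' : IsWeaklyRegular M (z :: x₁ :: ws) := by
      refine IsLocalRing.isWeaklyRegular_of_perm_of_subset_maximalIdeal hfull
        (List.Perm.swap z x₁ ws) ?_
      intro r hr
      rcases List.mem_cons.mp hr with rfl | hr
      · exact hradm hx₁r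
      rcases List.mem_cons.mp hr with rfl | hr
      · exact hzm
      · exact hIm (hwsI r hr)
    rw [isWeaklyRegular_cons_iff] at hfull'
    have hx₁ws : IsWeaklyRegular (QuotSMulTop z M) (x₁ :: ws) := hfull'.2
    -- second application of the induction hypothesis, on M ⧸ z M
    obtain ⟨vs, hvslen, hvsI, hvsreg⟩ := IH (m + 1) (by omega) (QuotSMulTop z M) I hIm
      (x₁ :: ws) (by
        intro x hx
        rcases List.mem_cons.mp hx with rfl | hx
        · exact hx₁r
        · exact Ideal.le_radical (hwsI x hx))
      hx₁ws (by simp [hwslen]) h hhI hhQz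
    simp only [Nat.add_sub_cancel] at hvslen
    -- transfer along the commutation isomorphism
    have hvsreg' : IsWeaklyRegular (QuotSMulTop z (QuotSMulTop h M)) vs :=
      ((quotSMulTopComm M h z).isWeaklyRegular_congr vs).mp hvsreg
    exact ⟨z :: vs, by simp [hvslen], by
      intro w hw
      rcases List.mem_cons.mp hw with rfl | hw
      · exact hzI
      · exact hvsI w hw, IsWeaklyRegular.cons hzQh hvsreg'⟩

end Grade
section Core

open RingTheory.Sequence Submodule IsLocalRing
open scoped Pointwise

universe u

lemma core_local : ∀ (n : ℕ) (R : Type u) [CommRing R] [IsLocalRing R] [IsNoetherianRing R]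
    (fs gs : List R), gs.length = n → fs.length = n →
    (∀ g ∈ gs, g ∈ maximalIdeal R) → IsWeaklyRegular R fs →
    Ideal.ofList fs ≤ (Ideal.ofList gs).radical → IsWeaklyRegular R gs := by
  intro n
  induction n with
  | zero =>
    intro R _ _ _ fs gs hglen _ _ _ _
    rw [List.length_eq_zero_iff.mp hglen]
    exact IsWeaklyRegular.nil R R
  | succ m ih =>
    intro R _ _ _ fs gs hglen hflen hgm hfreg hrad
    classical
    match gs, hglen with
    | g :: gs', hglen =>
    match fs, hflen with
    | f :: fs', hflen =>
    have hf1 : IsSMulRegular R f := ((isWeaklyRegular_cons_iff R f fs').mp hfreg).1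
    have hfrad : f ∈ (Ideal.ofList (g :: gs')).radical :=
      hrad (Ideal.subset_span (by simp))
    -- no associated prime of R contains (g :: gs')
    have hAssFin : (associatedPrimes R R).Finite := associatedPrimes_finite R R
    have hnotle : ∀ q ∈ hAssFin.toFinset, ¬ (Ideal.span {g} ⊔ Ideal.ofList gs' ≤ q) := by
      intro q hq hle
      rw [Set.Finite.mem_toFinset] at hq
      have hle' : Ideal.ofList (g :: gs') ≤ q := by rw [Ideal.ofList_cons]; exact hle
      have hradq : (Ideal.ofList (g :: gs')).radical ≤ q := by
        have := Ideal.radical_mono hle'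
        rwa [hq.isPrime.radical] at this
      exact hq.not_isSMulRegular (hradq hfrad) hf1
    obtain ⟨j, hjgs', hj⟩ := exists_add_mem_forall_not_mem
      (fun q hq => ((Set.Finite.mem_toFinset _).mp hq).isPrime)
      (Ideal.ofList gs') g hnotle
    set h : R := g + j with hh_def
    have hregh : IsSMulRegular R h := isSMulRegular_of_forall_assoc
      (fun q hq => hj q (hAssFin.mem_toFinset.mpr hq))
    have hgsm : Ideal.ofList (g :: gs') ≤ maximalIdeal R := by
      rw [Ideal.span_le]
      intro x hx
      exact hgm x hx
    have hgs'le : Ideal.ofList gs' ≤ Ideal.ofList (g :: gs') := by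
      rw [Ideal.ofList_cons]; exact le_sup_right
    have hhgs : h ∈ Ideal.ofList (g :: gs') :=
      (Ideal.ofList (g :: gs')).add_mem (Ideal.subset_span (by simp)) (hgs'le hjgs')
    have hhm : h ∈ maximalIdeal R := hgsm hhgs
    -- apply the grade lemma to get a weakly regular sequence of length m inside (gs) on R/hR
    obtain ⟨zs, hzslen, hzsI, hzsreg⟩ := grade_descend (m + 1) R (Ideal.ofList (g :: gs'))
      hgsm (f :: fs') (fun x hx => hrad (Ideal.subset_span hx)) hfreg hflen h hhgs hregh
    simp only [Nat.add_sub_cancel] at hzslen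
    -- pass to the quotient ring B = R / (h)
    have hspan_ne : Ideal.span {h} ≠ ⊤ := by
      intro he
      apply (IsLocalRing.maximalIdeal.isMaximal R).ne_top
      rw [eq_top_iff, ← he, Ideal.span_le, Set.singleton_subset_iff]
      exact hhm
    have heq : (h • ⊤ : Submodule R R) = (Ideal.span {h} : Ideal R) := by
      rw [← Submodule.ideal_span_singleton_smul, smul_eq_mul, Ideal.mul_top]
    let eB : QuotSMulTop h R ≃ₗ[R] (R ⧸ Ideal.span {h}) := Submodule.quotEquivOfEq _ _ heq
    haveI : Nontrivial (R ⧸ Ideal.span {h}) := Ideal.Quotient.nontrivial_iff.mpr hspan_ne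
    haveI : IsLocalRing (R ⧸ Ideal.span {h}) :=
      IsLocalRing.of_surjective' (Ideal.Quotient.mk _) Ideal.Quotient.mk_surjective
    have hBmax : ∀ x : R, x ∈ maximalIdeal R →
        Ideal.Quotient.mk (Ideal.span {h}) x ∈ maximalIdeal (R ⧸ Ideal.span {h}) := by
      intro x hx
      rw [IsLocalRing.mem_maximalIdeal, mem_nonunits_iff]
      intro hu
      obtain ⟨y, hy⟩ := isUnit_iff_exists_inv.mp hu
      obtain ⟨y', rfl⟩ := Ideal.Quotient.mk_surjective y
      rw [← map_mul, ← map_one (Ideal.Quotient.mk (Ideal.span {h})), Ideal.Quotient.eq] at hy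
      have h1m : (1 : R) ∈ maximalIdeal R := by
        have hxy : x * y' ∈ maximalIdeal R := (maximalIdeal R).mul_mem_right y' hx
        have hsub : x * y' - 1 ∈ maximalIdeal R := by
          apply (show Ideal.span {h} ≤ maximalIdeal R from ?_) hy
          rw [Ideal.span_le, Set.singleton_subset_iff]; exact hhm
        have : (1 : R) = x * y' - (x * y' - 1) := by ring
        rw [this]
        exact (maximalIdeal R).sub_mem hxy hsub
      exact (IsLocalRing.maximalIdeal.isMaximal R).ne_top ((Ideal.eq_top_iff_one _).mpr h1m)
    -- transfer the regular sequence zs to the ring B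
    have h1 : IsWeaklyRegular (R ⧸ Ideal.span {h}) zs := (eB.isWeaklyRegular_congr zs).mp hzsreg
    have h2 : IsWeaklyRegular (R ⧸ Ideal.span {h})
        (zs.map (Ideal.Quotient.mk (Ideal.span {h}))) := by
      rw [← Ideal.Quotient.algebraMap_eq, isWeaklyRegular_map_algebraMap_iff]
      exact h1
    -- the image of (gs) in B is generated by the images of gs'
    have hmapkey : (Ideal.ofList (g :: gs')).map (Ideal.Quotient.mk (Ideal.span {h})) ≤
        Ideal.ofList (gs'.map (Ideal.Quotient.mk (Ideal.span {h}))) := by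
      rw [Ideal.map_ofList, List.map_cons, Ideal.ofList_cons]
      apply sup_le
      · rw [Ideal.span_le, Set.singleton_subset_iff]
        have hg_eq : Ideal.Quotient.mk (Ideal.span {h}) g =
            - Ideal.Quotient.mk (Ideal.span {h}) j := by
          rw [eq_neg_iff_add_eq_zero, ← map_add, Ideal.Quotient.eq_zero_iff_mem]
          rw [hh_def] at *
          exact Ideal.subset_span rfl
        rw [hg_eq]
        apply neg_mem
        rw [← Ideal.map_ofList]
        exact Ideal.mem_map_of_mem _ hjgs'
      · exact le_rfl
    -- apply the induction hypothesis in B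
    have hmain : IsWeaklyRegular (R ⧸ Ideal.span {h})
        (gs'.map (Ideal.Quotient.mk (Ideal.span {h}))) := by
      apply ih (R ⧸ Ideal.span {h}) (zs.map (Ideal.Quotient.mk (Ideal.span {h})))
        (gs'.map (Ideal.Quotient.mk (Ideal.span {h})))
      · rw [List.length_map]
        simpa using hglen
      · rw [List.length_map]; exact hzslen
      · intro x hx
        obtain ⟨g', hg', rfl⟩ := List.mem_map.mp hx
        exact hBmax g' (hgm g' (by simp [hg']))
      · exact h2
      · rw [Ideal.span_le]
        intro x hx
        obtain ⟨z, hz, rfl⟩ := List.mem_map.mp hx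
        apply Ideal.le_radical
        exact hmapkey (Ideal.mem_map_of_mem _ (hzsI z hz))
    -- pull back to R
    have h3 : IsWeaklyRegular (R ⧸ Ideal.span {h}) gs' := by
      rw [← isWeaklyRegular_map_algebraMap_iff (R ⧸ Ideal.span {h}) _ gs',
        Ideal.Quotient.algebraMap_eq]
      exact hmain
    have h4 : IsWeaklyRegular (QuotSMulTop h R) gs' := (eB.symm.isWeaklyRegular_congr gs').mp h3
    have hcons : IsWeaklyRegular R (h :: gs') := IsWeaklyRegular.cons hregh h4
    -- permute and exchange h for g
    have happend : IsWeaklyRegular R (gs' ++ [h]) := by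
      refine IsLocalRing.isWeaklyRegular_of_perm_of_subset_maximalIdeal hcons
        (List.perm_append_singleton h gs').symm ?_
      intro r hr
      rcases List.mem_cons.mp hr with rfl | hr
      · exact hhm
      · exact hgm r (by simp [hr])
    rw [isWeaklyRegular_append_iff] at happend
    obtain ⟨hgs'reg, hsing⟩ := happend
    rw [isWeaklyRegular_singleton_iff] at hsing
    -- on R/(gs'), the actions of h and g agree
    have hact : ∀ x : R ⧸ (Ideal.ofList gs' • ⊤ : Submodule R R), g • x = h • x := by
      intro x
      obtain ⟨y, rfl⟩ := Submodule.mkQ_surjective _ x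
      have hj0 : j • (Submodule.mkQ _ y : R ⧸ (Ideal.ofList gs' • ⊤ : Submodule R R)) = 0 := by
        rw [Submodule.mkQ_apply, ← Submodule.Quotient.mk_smul, Submodule.Quotient.mk_eq_zero]
        exact Submodule.smul_mem_smul hjgs' trivial
      rw [hh_def, add_smul, hj0, add_zero]
    have hgreg : IsSMulRegular (R ⧸ (Ideal.ofList gs' • ⊤ : Submodule R R)) g := by
      intro x y hxy
      apply hsing
      show h • x = h • y
      rw [← hact x, ← hact y]
      exact hxy
    have happend' : IsWeaklyRegular R (gs' ++ [g]) := by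
      rw [isWeaklyRegular_append_iff]
      exact ⟨hgs'reg, (isWeaklyRegular_singleton_iff _ _).mpr hgreg⟩
    refine IsLocalRing.isWeaklyRegular_of_perm_of_subset_maximalIdeal happend'
      (List.perm_append_singleton g gs') ?_
    intro r hr
    rcases List.mem_append.mp hr with hr | hr
    · exact hgm r (by simp [hr])
    · rw [List.mem_singleton.mp hr]
      exact hgm g (by simp)

end Core
section Glue

open RingTheory.Sequence Submodule IsLocalRing
open scoped Pointwise

variable {R : Type*} [CommRing R]

lemma isWeaklyRegular_localizedModule_iff_localization (p : Ideal R) [p.IsPrime] (rs : List R) :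
    IsWeaklyRegular (LocalizedModule p.primeCompl R)
      (rs.map (algebraMap R (Localization.AtPrime p))) ↔
    IsWeaklyRegular (Localization.AtPrime p)
      (rs.map (algebraMap R (Localization.AtPrime p))) := by
  let e0 : LocalizedModule p.primeCompl R ≃ₗ[R] Localization.AtPrime p :=
    IsLocalizedModule.iso p.primeCompl (Algebra.linearMap R (Localization.AtPrime p))
  refine AddEquiv.isWeaklyRegular_congr (e := e0.toAddEquiv) ?_
  rw [List.forall₂_map_right_iff, List.forall₂_map_left_iff]
  refine List.forall₂_same.mpr fun r _ x => ?_
  rw [algebraMap_smul, algebraMap_smul]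
  exact e0.map_smul r x

end Glue




open RingTheory.Sequence

/-- Corollary 2 (ring case): if `V(g₁,…,g_r) ⊆ V(f₁,…,f_r)` in `Spec R` and `f₁,…,f_r` is a
regular sequence in the noetherian ring `R`, then `g₁,…,g_r` is also a regular sequence in `R`. -/
theorem isRegularSeq_of_zeroLocus_subset
    {R : Type*} [CommRing R] [IsNoetherianRing R]
    (fs gs : List R) (hlen : gs.length = fs.length)
    (hV : PrimeSpectrum.zeroLocus {x | x ∈ gs} ⊆ PrimeSpectrum.zeroLocus {x | x ∈ fs})
    (hf : IsRegularSeq R R fs) :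
    IsRegularSeq R R gs := by
  intro p hp
  open RingTheory.Sequence Submodule IsLocalRing in
  have hIT : ∀ (I : Ideal R), (I • ⊤ : Submodule R R) = I := by
    intro I
    rw [smul_eq_mul, Ideal.mul_top]
  rw [hIT] at hp
  have hgsp : Ideal.ofList gs ≤ p.asIdeal := by
    have := Module.mem_support_iff_of_finite.mp hp
    rwa [Ideal.annihilator_quotient] at this
  have hgs_sub : {x : R | x ∈ gs} ⊆ (p.asIdeal : Set R) :=
    fun x hx => hgsp (Ideal.subset_span hx)
  have hfs_sub : {x : R | x ∈ fs} ⊆ (p.asIdeal : Set R) := hV hgs_sub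
  have hfsp : Ideal.ofList fs ≤ p.asIdeal := Ideal.span_le.mpr hfs_sub
  -- fs is weakly regular on the localization at p
  have hpf : p ∈ Module.support R (R ⧸ (Ideal.ofList fs • ⊤ : Submodule R R)) := by
    rw [hIT]
    apply Module.mem_support_iff_of_finite.mpr
    rwa [Ideal.annihilator_quotient]
  have hfreg := hf p hpf
  rw [isWeaklyRegular_localizedModule_iff_localization] at hfreg
  -- set up the local ring
  haveI : IsNoetherianRing (Localization.AtPrime p.asIdeal) :=
    IsLocalization.isNoetherianRing p.asIdeal.primeCompl _ ‹IsNoetherianRing R›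
  rw [isWeaklyRegular_localizedModule_iff_localization]
  set A := Localization.AtPrime p.asIdeal with hA
  set φ := algebraMap R A with hφ
  -- radical condition in the localization
  have hrad : Ideal.ofList (fs.map φ) ≤ (Ideal.ofList (gs.map φ)).radical := by
    rw [Ideal.radical_eq_sInf]
    apply le_sInf
    rintro q ⟨hq1, hq2⟩
    rw [Ideal.span_le]
    intro x hx
    obtain ⟨f, hf', rfl⟩ := List.mem_map.mp hx
    have hgs_comap : {x : R | x ∈ gs} ⊆ ((q.comap φ : Ideal R) : Set R) := by
      intro g hg
      have : φ g ∈ q := hq1 (Ideal.subset_span (List.mem_map_of_mem (f := φ) hg))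
      exact this
    haveI : (q.comap φ).IsPrime := hq2.comap φ
    have hmem : (⟨q.comap φ, inferInstance⟩ : PrimeSpectrum R) ∈
        PrimeSpectrum.zeroLocus {x : R | x ∈ gs} := hgs_comap
    have := hV hmem
    exact this hf'
  -- memberships in the maximal ideal
  have hgm : ∀ x ∈ gs.map φ, x ∈ maximalIdeal A := by
    intro x hx
    obtain ⟨g, hg, rfl⟩ := List.mem_map.mp hx
    exact (IsLocalization.AtPrime.to_map_mem_maximal_iff A p.asIdeal g).mpr
      (hgsp (Ideal.subset_span hg))
  exact core_local (fs.map φ).length A (fs.map φ) (gs.map φ)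
    (by simp [hlen]) rfl hgm hfreg hrad
end

section
/- ((*)₁) Let R be a commutative noetherian ring, f ∈ R, and M a finitely generated R-module. If depth_{R_𝔭}(M_𝔭) ≥ 1 for every prime 𝔭 ∈ Ass(M/fM), then f is a non-zero divisor on M. -/
open RingTheory.Sequence

/-- The depth of a module `M` over a local ring `R`: the supremum of the lengths of
(strongly) regular sequences on `M` consisting of elements of the maximal ideal. -/
noncomputable def moduleDepth (R M : Type*) [CommRing R] [IsLocalRing R]
    [AddCommGroup M] [Module R M] : ℕ∞ :=
  sSup {n : ℕ∞ | ∃ fs : List R, (fs.length : ℕ∞) = n ∧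
    (∀ f ∈ fs, f ∈ IsLocalRing.maximalIdeal R) ∧ IsWeaklyRegular M fs}

lemma aux_mk_eq_zero {R : Type*} [CommRing R] {S : Submonoid R} {M : Type*} [AddCommGroup M]
    [Module R M] (m : M) (s : S) :
    (LocalizedModule.mk m s : LocalizedModule S M) = 0 ↔ ∃ u : S, u • m = 0 := by
  rw [← LocalizedModule.zero_mk (1 : S), LocalizedModule.mk_eq]
  simp

theorem mem_assPrimes_of_mem_minPrimes_ann
    {R : Type*} [CommRing R] [IsNoetherianRing R] {M : Type*} [AddCommGroup M] [Module R M]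
    [Module.Finite R M] {q : Ideal R} (hq : q ∈ (Module.annihilator R M).minimalPrimes) :
    q ∈ associatedPrimes R M := by
  classical
  have hqprime : q.IsPrime := hq.1.1
  set Rq := Localization.AtPrime q
  set Mq := LocalizedModule q.primeCompl M
  haveI : IsNoetherianRing Rq := IsLocalization.isNoetherianRing q.primeCompl Rq inferInstance
  -- a nonzero element of Mq
  have hnontriv : ∃ m : M, (LocalizedModule.mk m (1 : q.primeCompl) : Mq) ≠ 0 := by
    by_contra hcon
    push_neg at hcon
    obtain ⟨T, hT⟩ := Module.Finite.fg_top (R := R) (M := M)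
    have : ∀ m : M, ∃ u : q.primeCompl, u • m = 0 := by
      intro m
      exact (aux_mk_eq_zero m 1).mp (hcon m)
    choose u hu using this
    set s₀ : q.primeCompl := ∏ t ∈ T, u t with hs₀
    have hkill : ∀ m : M, (s₀ : R) • m = 0 := by
      intro m
      have hm : m ∈ Submodule.span R (T : Set M) := hT ▸ Submodule.mem_top
      induction hm using Submodule.span_induction with
      | mem x hx =>
        obtain ⟨c, hc⟩ : ∃ c : R, (s₀ : R) = c * (u x : R) := by
          refine ⟨(∏ t ∈ T.erase x, u t : q.primeCompl), ?_⟩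
          rw [hs₀, ← Submonoid.coe_mul, ← Finset.prod_erase_mul T u hx]
        rw [hc, mul_smul, ← Submonoid.smul_def, hu x]; simp
      | zero => rw [smul_zero]
      | add x y _ _ hx hy => rw [smul_add, hx, hy, add_zero]
      | smul c x _ hx => rw [smul_comm, hx, smul_zero]
    have : (s₀ : R) ∈ Module.annihilator R M := Module.mem_annihilator.mpr hkill
    exact s₀.2 (hq.1.2 this)
  obtain ⟨m₀, hm₀⟩ := hnontriv
  haveI : Nontrivial Mq := ⟨_, _, hm₀⟩
  obtain ⟨P, hP⟩ := associatedPrimes.nonempty Rq Mq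
  obtain ⟨x, hx⟩ := (isAssociatedPrime_iff.mp hP).2
  haveI hPprime : P.IsPrime := hP.1
  -- comap P = q
  have hannle : ∀ a ∈ Module.annihilator R M, algebraMap R Rq a ∈ P := by
    intro a ha
    rw [hx, Submodule.mem_colon_singleton, Submodule.mem_bot, algebraMap_smul]
    induction x using LocalizedModule.induction_on with
    | _ m s =>
      rw [LocalizedModule.smul'_mk, Module.mem_annihilator.mp ha, LocalizedModule.zero_mk]
  have hcomle : P.comap (algebraMap R Rq) ≤ q := by
    have h1 : P ≤ IsLocalRing.maximalIdeal Rq := IsLocalRing.le_maximalIdeal hPprime.ne_top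
    have h2 := Ideal.comap_mono (f := algebraMap R Rq) h1
    rwa [← Ideal.under_def R (IsLocalRing.maximalIdeal Rq), Localization.AtPrime.under_maximalIdeal] at h2
  have hcom : P.comap (algebraMap R Rq) = q := by
    refine le_antisymm hcomle (hq.2 ⟨Ideal.comap_isPrime _ P, fun a ha => hannle a ha⟩ hcomle)
  -- write x as a fraction
  obtain ⟨m, s, rfl⟩ : ∃ (m : M) (s : q.primeCompl), x = LocalizedModule.mk m s := by
    induction x using LocalizedModule.induction_on with
    | _ m s => exact ⟨m, s, rfl⟩
  -- generators of q
  obtain ⟨T, hT⟩ := (IsNoetherian.noetherian q : q.FG)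
  have hgen : ∀ a ∈ T, ∃ u : q.primeCompl, u • a • m = 0 := by
    intro a ha
    have haq : a ∈ q := hT ▸ Ideal.subset_span ha
    have : algebraMap R Rq a ∈ P := by rw [← hcom] at haq; exact haq
    rw [hx, Submodule.mem_colon_singleton, Submodule.mem_bot, algebraMap_smul,
      LocalizedModule.smul'_mk, aux_mk_eq_zero] at this
    exact this
  choose! u hu using hgen
  set s₀ : q.primeCompl := ∏ t ∈ T, u t with hs₀
  have hs₀kill : ∀ a ∈ T, a • ((s₀ : R) • m) = 0 := by
    intro a ha
    obtain ⟨c, hc⟩ : ∃ c : R, (s₀ : R) = c * (u a : R) := by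
      refine ⟨(∏ t ∈ T.erase a, u t : q.primeCompl), ?_⟩
      rw [hs₀, ← Submonoid.coe_mul, ← Finset.prod_erase_mul T u ha]
    rw [smul_comm, hc, mul_smul, ← Submonoid.smul_def, hu a ha]; simp
  refine isAssociatedPrime_iff.mpr ⟨hqprime, (s₀ : R) • m, le_antisymm ?_ ?_⟩
  · refine le_trans hT.ge (Ideal.span_le.mpr ?_)
    intro a ha
    rw [SetLike.mem_coe, Submodule.mem_colon_singleton, Submodule.mem_bot]
    exact hs₀kill a ha
  · intro b hb
    rw [Submodule.mem_colon_singleton, Submodule.mem_bot] at hb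
    have : algebraMap R Rq b ∈ P := by
      rw [hx, Submodule.mem_colon_singleton, Submodule.mem_bot, algebraMap_smul,
        LocalizedModule.smul'_mk, aux_mk_eq_zero]
      exact ⟨s₀, by rwa [smul_comm] at hb⟩
    rw [← hcom]
    exact this


open Pointwise

/-- `(*)₁`: if `depth_{R_𝔭}(M_𝔭) ≥ 1` for every prime `𝔭 ∈ Ass(M/fM)`, then `f` is a
non-zero divisor on the finitely generated module `M`. -/
theorem isSMulRegular_of_depth_ge_one_on_ass
    {R : Type*} [CommRing R] [IsNoetherianRing R]
    {M : Type*} [AddCommGroup M] [Module R M] [Module.Finite R M] (f : R)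
    (h : ∀ p : PrimeSpectrum R,
      p.asIdeal ∈ associatedPrimes R (M ⧸ (Ideal.span {f} • ⊤ : Submodule R M)) →
      1 ≤ moduleDepth (Localization.AtPrime p.asIdeal) (LocalizedModule p.asIdeal.primeCompl M)) :
    IsSMulRegular M f := by
  classical
  by_contra hreg
  -- get a nonzero element killed by f
  obtain ⟨z, hz0, hzf⟩ : ∃ z : M, z ≠ 0 ∧ f • z = 0 := by
    rw [IsSMulRegular] at hreg
    rw [Function.not_injective_iff] at hreg
    obtain ⟨x, y, hxy, hne⟩ := hreg
    exact ⟨x - y, sub_ne_zero.mpr hne, by rw [smul_sub, hxy, sub_self]⟩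
  haveI : IsNoetherian R M := isNoetherian_of_isNoetherianRing_of_finite R M
  -- stabilizing kernel chain
  set c : ℕ →o Submodule R M :=
    ⟨fun n => LinearMap.ker (LinearMap.lsmul R M (f ^ n)), by
      intro n m hnm
      intro x hx
      rw [LinearMap.mem_ker, LinearMap.lsmul_apply] at hx ⊢
      rw [← Nat.sub_add_cancel hnm, pow_add, mul_smul, hx, smul_zero]⟩ with hc
  obtain ⟨k0, hk0⟩ := monotone_stabilizes_iff_noetherian.mpr ‹IsNoetherian R M› c
  set k := k0 + 1 with hk
  set N : Submodule R M := LinearMap.ker (LinearMap.lsmul R M (f ^ k)) with hN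
  have hNc : ∀ m, k ≤ m → N = LinearMap.ker (LinearMap.lsmul R M (f ^ m)) := by
    intro m hm
    have h1 : c k0 = c k := hk0 k (by omega)
    have h2 : c k0 = c m := hk0 m (by omega)
    show c k = c m
    rw [← h1, h2]
  have hfkN : ∀ n ∈ N, (f ^ k) • n = 0 := fun n hn => hn
  have hzN : z ∈ N := by
    show (f ^ k) • z = 0
    rw [hk, pow_succ, mul_smul, hzf, smul_zero]
  set fM : Submodule R M := Ideal.span {f} • ⊤ with hfM
  have hfM_mem : ∀ z : M, z ∈ fM → ∃ x : M, f • x = z := by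
    intro w hw
    rw [hfM, Submodule.ideal_span_singleton_smul, ← SetLike.mem_coe,
      Submodule.coe_pointwise_smul] at hw
    obtain ⟨y, -, hy⟩ := hw
    exact ⟨y, hy⟩
  -- the annihilator of N
  have hann_ne_top : N.annihilator ≠ ⊤ := by
    intro htop
    have h1 : (1 : R) ∈ N.annihilator := htop ▸ Submodule.mem_top
    have := Submodule.mem_annihilator.mp h1 z hzN
    rw [one_smul] at this
    exact hz0 this
  obtain ⟨Jmax, hJmax, hleJ⟩ := Ideal.exists_le_maximal _ hann_ne_top
  haveI := hJmax.isPrime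
  obtain ⟨q, hqmin, -⟩ := Ideal.exists_minimalPrimes_le hleJ
  have hqprime : q.IsPrime := hqmin.1.1
  have hannN_le_q : N.annihilator ≤ q := hqmin.1.2
  -- the image of N in M/fM
  set Y : Submodule R (M ⧸ fM) := N.map fM.mkQ with hY
  have hannN_le_annY : N.annihilator ≤ Y.annihilator := by
    intro a ha
    rw [Submodule.mem_annihilator]
    rintro y ⟨n, hn, rfl⟩
    rw [← map_smul, Submodule.mem_annihilator.mp ha n hn, map_zero]
  have hannY_le_q : Y.annihilator ≤ q := by
    intro s hs
    by_contra hsq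
    -- s • N ⊆ f • N
    have step : ∀ n ∈ N, ∃ n' ∈ N, s • n = f • n' := by
      intro n hn
      have h1 : s • fM.mkQ n = 0 := by
        refine Submodule.mem_annihilator.mp hs _ ?_
        exact ⟨n, hn, rfl⟩
      rw [← map_smul] at h1
      have h2 : s • n ∈ fM := (Submodule.Quotient.mk_eq_zero fM).mp h1
      obtain ⟨x, hx⟩ := hfM_mem _ h2
      refine ⟨x, ?_, hx.symm⟩
      rw [hNc (k + 1) (by omega)]
      show (f ^ (k + 1)) • x = 0
      rw [pow_succ, mul_smul, hx, smul_comm, hfkN n hn, smul_zero]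
    have steps : ∀ j : ℕ, ∀ n ∈ N, ∃ n' ∈ N, (s ^ j) • n = (f ^ j) • n' := by
      intro j
      induction j with
      | zero => exact fun n hn => ⟨n, hn, by rw [pow_zero, pow_zero]⟩
      | succ j ih =>
        intro n hn
        obtain ⟨n1, hn1, h1⟩ := step n hn
        obtain ⟨n', hn', h2⟩ := ih n1 hn1
        refine ⟨n', hn', ?_⟩
        rw [pow_succ, mul_smul, h1, smul_comm, h2, ← mul_smul, ← pow_succ']
    have hsk : s ^ k ∈ N.annihilator := by
      rw [Submodule.mem_annihilator]
      intro n hn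
      obtain ⟨n', hn', hsn'⟩ := steps k n hn
      rw [hsn', hfkN n' hn']
    exact hsq (hqprime.mem_of_pow_mem k (hannN_le_q hsk))
  -- q is minimal over the annihilator of Y
  have hqY : q ∈ (Module.annihilator R ↥Y).minimalPrimes := by
    refine ⟨⟨hqprime, hannY_le_q⟩, ?_⟩
    rintro p ⟨hp, hp2⟩ hpq
    exact hqmin.2 ⟨hp, le_trans hannN_le_annY hp2⟩ hpq
  haveI : Module.Finite R ↥Y :=
    Module.Finite.iff_fg.mpr (Submodule.FG.map _ (IsNoetherian.noetherian N))
  have hassY : q ∈ associatedPrimes R ↥Y := mem_assPrimes_of_mem_minPrimes_ann hqY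
  have hass : q ∈ associatedPrimes R (M ⧸ fM) :=
    associatedPrimes.subset_of_injective Y.injective_subtype hassY
  -- apply the depth hypothesis
  have hdepth := h ⟨q, hqprime⟩ hass
  set Rq := Localization.AtPrime q with hRq
  set Mq := LocalizedModule q.primeCompl M with hMq
  obtain ⟨g, hgmax, hgreg⟩ : ∃ g : Rq, g ∈ IsLocalRing.maximalIdeal Rq ∧ IsSMulRegular Mq g := by
    by_contra hcon
    push_neg at hcon
    have hle : moduleDepth Rq Mq ≤ 0 := by
      refine sSup_le ?_
      rintro a ⟨fs, hlen, hmem, hwr⟩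
      match fs, hlen with
      | [], hlen => exact hlen ▸ le_refl _
      | (g :: rest), hlen =>
        exfalso
        have h1 := (isWeaklyRegular_cons_iff Mq g rest).mp hwr
        exact hcon g (hmem g (List.mem_cons_self)) h1.1
    exact absurd (hdepth.trans hle) (by norm_num)
  -- find a nonzero element of Mq coming from N
  obtain ⟨n, hnN, hn0⟩ : ∃ n : M, n ∈ N ∧ (LocalizedModule.mk n (1 : q.primeCompl) : Mq) ≠ 0 := by
    by_contra hcon
    push_neg at hcon
    obtain ⟨T, hT⟩ := (IsNoetherian.noetherian N : N.FG)
    have hu : ∀ t : M, t ∈ T → ∃ u : q.primeCompl, u • t = 0 := by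
      intro t ht
      have htN : t ∈ N := hT ▸ Submodule.subset_span ht
      exact (aux_mk_eq_zero t 1).mp (hcon t htN)
    choose! u hu using hu
    set s₀ : q.primeCompl := ∏ t ∈ T, u t with hs₀
    have hkill : ∀ n ∈ N, (s₀ : R) • n = 0 := by
      intro n hn
      rw [← hT] at hn
      induction hn using Submodule.span_induction with
      | mem x hx =>
        obtain ⟨d, hd⟩ : ∃ d : R, (s₀ : R) = d * (u x : R) := by
          refine ⟨(∏ t ∈ T.erase x, u t : q.primeCompl), ?_⟩
          rw [hs₀, ← Submonoid.coe_mul, ← Finset.prod_erase_mul T u hx]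
        rw [hd, mul_smul, ← Submonoid.smul_def, hu x hx]; simp
      | zero => rw [smul_zero]
      | add x y _ _ hx hy => rw [smul_add, hx, hy, add_zero]
      | smul c x _ hx => rw [smul_comm, hx, smul_zero]
    have : (s₀ : R) ∈ N.annihilator := Submodule.mem_annihilator.mpr hkill
    exact s₀.2 (hannN_le_q this)
  set y : Mq := LocalizedModule.mk n (1 : q.primeCompl) with hy
  -- g lies in the radical of the extension of the annihilator of N
  have hgrad : g ∈ (Ideal.map (algebraMap R Rq) N.annihilator).radical := by
    rw [Ideal.radical_eq_sInf]
    refine Ideal.mem_sInf.mpr ?_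
    rintro P ⟨hPle, hPprime⟩
    have hcomle : P.comap (algebraMap R Rq) ≤ q := by
      have h1 : P ≤ IsLocalRing.maximalIdeal Rq := IsLocalRing.le_maximalIdeal hPprime.ne_top
      have h2 := Ideal.comap_mono (f := algebraMap R Rq) h1
      rwa [← Ideal.under_def R (IsLocalRing.maximalIdeal Rq), Localization.AtPrime.under_maximalIdeal] at h2
    have hcomge : N.annihilator ≤ P.comap (algebraMap R Rq) :=
      Ideal.map_le_iff_le_comap.mp hPle
    have hcom : P.comap (algebraMap R Rq) = q :=
      le_antisymm hcomle (hqmin.2 ⟨Ideal.comap_isPrime _ P, hcomge⟩ hcomle)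
    have hPmax : P = IsLocalRing.maximalIdeal Rq := by
      have e1 := IsLocalization.map_comap q.primeCompl Rq P
      have e2 := IsLocalization.map_comap q.primeCompl Rq (IsLocalRing.maximalIdeal Rq)
      rw [Ideal.under_def, hcom] at e1
      rw [Localization.AtPrime.under_maximalIdeal] at e2
      rw [← e1, ← e2]
    rw [hPmax]
    exact hgmax
  obtain ⟨j, hj⟩ := Ideal.mem_radical_iff.mp hgrad
  -- g ^ j kills y
  have hgjy : (g ^ j) • y = 0 := by
    have hA : Ideal.map (algebraMap R Rq) N.annihilator ≤
        LinearMap.ker (LinearMap.toSpanSingleton Rq Mq y) := by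
      rw [Ideal.map_le_iff_le_comap]
      intro a ha
      rw [Ideal.mem_comap, LinearMap.mem_ker, LinearMap.toSpanSingleton_apply,
        algebraMap_smul, hy, LocalizedModule.smul'_mk,
        Submodule.mem_annihilator.mp ha n hnN, LocalizedModule.zero_mk]
    have := hA hj
    rwa [LinearMap.mem_ker, LinearMap.toSpanSingleton_apply] at this
  -- minimal power trick
  have hex : ∃ i, (g ^ i) • y = 0 := ⟨j, hgjy⟩
  set i₀ := Nat.find hex with hi₀
  have hi₀pos : i₀ ≠ 0 := by
    intro h0
    have := Nat.find_spec hex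
    rw [← hi₀, h0, pow_zero, one_smul] at this
    exact hn0 this
  have hxne : (g ^ (i₀ - 1)) • y ≠ 0 := Nat.find_min hex (by omega)
  have hgx : g • ((g ^ (i₀ - 1)) • y) = 0 := by
    rw [← mul_smul, ← pow_succ']
    have : i₀ - 1 + 1 = i₀ := by omega
    rw [this]
    exact Nat.find_spec hex
  have := hgreg (by rw [hgx, smul_zero] : g • ((g ^ (i₀ - 1)) • y) = g • 0)
  exact hxne this
end

section
/- Let P = k[X,Y,Z] be the polynomial ring in three indeterminates over a field k, let 𝔭 = P(X−1) + PZ, 𝔮 = PY, and R = P/(𝔭 ∩ 𝔮) = P/(PY(X−1) + PYZ). Then the sequence Z, X is a regular sequence on the P-module R but is not a strongly regular sequence on R. -/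
open RingTheory.Sequence Pointwise

namespace RegNotStrongAux

open MvPolynomial

variable {k : Type*} [Field k]

/-- membership in a pointwise-smul of ⊤ -/
lemma mem_psmul_top {R M : Type*} [CommRing R] [AddCommGroup M] [Module R M]
    (r : R) (x : M) : x ∈ r • (⊤ : Submodule R M) ↔ ∃ y, r • y = x := by
  constructor
  · intro h
    rw [← SetLike.mem_coe, Submodule.coe_pointwise_smul] at h
    obtain ⟨y, -, rfl⟩ := h
    exact ⟨y, rfl⟩
  · rintro ⟨y, rfl⟩
    exact Submodule.smul_mem_pointwise_smul y r ⊤ trivial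

lemma sub_aeval_mem (J : Ideal (MvPolynomial (Fin 3) k)) (v : Fin 3 → MvPolynomial (Fin 3) k)
    (hv : ∀ i, X i - v i ∈ J) (q : MvPolynomial (Fin 3) k) : q - aeval v q ∈ J := by
  induction q using MvPolynomial.induction_on with
  | C a => simp
  | add p q hp hq =>
      have := J.add_mem hp hq
      rw [map_add]
      convert this using 1
      ring
  | mul_X p i hp =>
      have heq : p * X i - aeval v (p * X i) =
          p * (X i - v i) + (p - aeval v p) * v i := by
        rw [map_mul, aeval_X]; ring
      rw [heq]
      exact J.add_mem (J.mul_mem_left p (hv i)) (J.mul_mem_right (v i) hp)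

lemma smul_qmk (I : Ideal (MvPolynomial (Fin 3) k)) (r q : MvPolynomial (Fin 3) k) :
    r • Ideal.Quotient.mk I q = Ideal.Quotient.mk I (r * q) := by
  rw [← Ideal.Quotient.mk_eq_mk, ← Ideal.Quotient.mk_eq_mk, ← Submodule.Quotient.mk_smul,
    smul_eq_mul]

/-- Claim 1: if `Z·c ∈ I = (Y(X−1), YZ)` then `(X−1)·c ∈ I`. -/
lemma claim1 (c : MvPolynomial (Fin 3) k)
    (hc : X 2 * c ∈ Ideal.span {X 1 * (X 0 - 1), X 1 * X 2}) :
    (X 0 - 1) * c ∈ Ideal.span {X 1 * (X 0 - 1), X 1 * X 2} := by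
  set ψ : MvPolynomial (Fin 3) k →ₐ[k] MvPolynomial (Fin 3) k :=
    aeval (fun j : Fin 3 => if j = 1 then 0 else X j) with hψ
  have hIker : Ideal.span {X 1 * (X 0 - 1), X 1 * X 2} ≤ RingHom.ker ψ.toRingHom := by
    rw [Ideal.span_le]
    rintro q hq
    simp only [Set.mem_insert_iff, Set.mem_singleton_iff] at hq
    rcases hq with rfl | rfl <;> simp [RingHom.mem_ker, hψ]
  have h1 : ψ (X 2 * c) = 0 := hIker hc
  have h2 : (X 2 : MvPolynomial (Fin 3) k) * ψ c = 0 := by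
    rw [map_mul] at h1
    rw [← h1, hψ]
    simp
  have h3 : ψ c = 0 := by
    rcases mul_eq_zero.mp h2 with h | h
    · exact absurd h (X_ne_zero _)
    · exact h
  have h4 : c ∈ Ideal.span ({X 1} : Set (MvPolynomial (Fin 3) k)) := by
    have hmem := sub_aeval_mem (Ideal.span {X 1})
      (fun j : Fin 3 => if j = 1 then 0 else X j)
      (fun i => by
        by_cases h : i = 1
        · subst h; simp [Ideal.mem_span_singleton]
        · simp [h]) c
    rw [show aeval (fun j : Fin 3 => if j = 1 then 0 else X j) c = ψ c from rfl,
      h3, sub_zero] at hmem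
    exact hmem
  obtain ⟨d, rfl⟩ := Ideal.mem_span_singleton.mp h4
  have heq : (X 0 - 1) * (X 1 * d) = (X 1 * (X 0 - 1)) * d := by ring
  rw [heq]
  exact Ideal.mul_mem_right _ _ (Ideal.subset_span (Set.mem_insert _ _))

/-- Claim 2: if `s ∉ (Y,Z)` and `s·X·c ≡ Z·e mod I` then `(X−1)·c ≡ Z·e' mod I` for some `e'`. -/
lemma claim2 (s c e : MvPolynomial (Fin 3) k)
    (hs : s ∉ Ideal.span ({X 1, X 2} : Set (MvPolynomial (Fin 3) k)))
    (h : s * (X 0 * c) - X 2 * e ∈ Ideal.span {X 1 * (X 0 - 1), X 1 * X 2}) :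
    ∃ e', (X 0 - 1) * c - X 2 * e' ∈ Ideal.span {X 1 * (X 0 - 1), X 1 * X 2} := by
  set φ : MvPolynomial (Fin 3) k →ₐ[k] MvPolynomial (Fin 3) k :=
    aeval (fun j : Fin 3 => if j = 0 then X j else 0) with hφ
  have hvmem : ∀ i : Fin 3, X i - (fun j : Fin 3 => if j = 0 then X j else 0) i ∈
      Ideal.span ({X 1, X 2} : Set (MvPolynomial (Fin 3) k)) := by
    intro i
    by_cases h : i = 0
    · subst h; simp
    · simp only [if_neg h, sub_zero]
      apply Ideal.subset_span
      rcases i with ⟨iv, hi⟩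
      interval_cases iv
      · exact absurd rfl h
      · exact Set.mem_insert _ _
      · exact Set.mem_insert_of_mem _ rfl
  have hIker : Ideal.span {X 1 * (X 0 - 1), X 1 * X 2} ≤ RingHom.ker φ.toRingHom := by
    rw [Ideal.span_le]
    rintro q hq
    simp only [Set.mem_insert_iff, Set.mem_singleton_iff] at hq
    rcases hq with rfl | rfl <;> simp [RingHom.mem_ker, hφ]
  have h1 : φ (s * (X 0 * c) - X 2 * e) = 0 := hIker h
  have h2 : φ s * ((X 0 : MvPolynomial (Fin 3) k) * φ c) = 0 := by
    have hX0 : φ (X 0) = X 0 := by rw [hφ]; simp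
    have hX2 : φ (X 2) = (0 : MvPolynomial (Fin 3) k) := by rw [hφ]; simp
    rw [map_sub, map_mul, map_mul, map_mul, hX0, hX2, zero_mul, sub_zero] at h1
    exact h1
  have hφs : φ s ≠ 0 := by
    intro h0
    apply hs
    have := sub_aeval_mem (Ideal.span ({X 1, X 2} : Set (MvPolynomial (Fin 3) k)))
      (fun j : Fin 3 => if j = 0 then X j else 0) hvmem s
    rwa [show aeval (fun j : Fin 3 => if j = 0 then X j else 0) s = φ s from rfl,
      h0, sub_zero] at this
  have h3 : φ c = 0 := by
    rcases mul_eq_zero.mp h2 with h' | h'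
    · exact absurd h' hφs
    · rcases mul_eq_zero.mp h' with h'' | h''
      · exact absurd h'' (X_ne_zero _)
      · exact h''
  have h4 : c ∈ Ideal.span ({X 1, X 2} : Set (MvPolynomial (Fin 3) k)) := by
    have := sub_aeval_mem (Ideal.span ({X 1, X 2} : Set (MvPolynomial (Fin 3) k)))
      (fun j : Fin 3 => if j = 0 then X j else 0) hvmem c
    rwa [show aeval (fun j : Fin 3 => if j = 0 then X j else 0) c = φ c from rfl,
      h3, sub_zero] at this
  obtain ⟨a, b, hab⟩ := Ideal.mem_span_pair.mp h4
  refine ⟨b * (X 0 - 1), ?_⟩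
  have heq : (X 0 - 1) * c - X 2 * (b * (X 0 - 1)) = (X 1 * (X 0 - 1)) * a := by
    rw [← hab]; ring
  rw [heq]
  exact Ideal.mul_mem_right _ _ (Ideal.subset_span (Set.mem_insert _ _))

lemma Y_notMem :
    (X 1 : MvPolynomial (Fin 3) k) ∉ Ideal.span {X 1 * (X 0 - 1), X 1 * X 2} := by
  intro hY0
  have hIker : (Ideal.span {X 1 * (X 0 - 1), X 1 * X 2} : Ideal (MvPolynomial (Fin 3) k)) ≤
      RingHom.ker (aeval (![1, 1, 0] : Fin 3 → k)).toRingHom := by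
    rw [Ideal.span_le]
    rintro q hq
    simp only [Set.mem_insert_iff, Set.mem_singleton_iff] at hq
    rcases hq with rfl | rfl <;> simp [RingHom.mem_ker]
  have h1 : (aeval (![1, 1, 0] : Fin 3 → k)) (X 1 : MvPolynomial (Fin 3) k) = 0 := hIker hY0
  simp at h1

end RegNotStrongAux

set_option maxHeartbeats 2000000 in
/-- Example: let `P = k[X,Y,Z]`, and `R = P/(PY(X−1) + PYZ)` (which is `P/(𝔭 ∩ 𝔮)` for
`𝔭 = P(X−1) + PZ`, `𝔮 = PY`). Then `Z, X` is a regular sequence on the `P`-module `R`,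
but not a strongly regular sequence. -/
theorem regular_not_strongly_regular_example
    (k : Type*) [Field k] :
    let P := MvPolynomial (Fin 3) k
    let X : P := MvPolynomial.X 0
    let Y : P := MvPolynomial.X 1
    let Z : P := MvPolynomial.X 2
    let I : Ideal P := Ideal.span {Y * (X - 1), Y * Z}
    IsRegularSeq P (P ⧸ I) [Z, X] ∧
      ¬ RingTheory.Sequence.IsWeaklyRegular (P ⧸ I) [Z, X] := by
  intro P X Y Z I
  have hXd : X = MvPolynomial.X 0 := rfl
  have hYd : Y = MvPolynomial.X 1 := rfl
  have hZd : Z = MvPolynomial.X 2 := rfl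
  have hYX1 : (Y * (X - 1) : P) ∈ I := Ideal.subset_span (Set.mem_insert _ _)
  have hYZ : (Y * Z : P) ∈ I := Ideal.subset_span (Set.mem_insert_of_mem _ rfl)
  -- key fact 1 at the level of P ⧸ I
  have key1 : ∀ x : P ⧸ I, Z • x = 0 → (X - 1) • x = 0 := by
    intro x hx
    obtain ⟨q, rfl⟩ := Ideal.Quotient.mk_surjective x
    rw [RegNotStrongAux.smul_qmk, Ideal.Quotient.eq_zero_iff_mem] at hx
    rw [RegNotStrongAux.smul_qmk, Ideal.Quotient.eq_zero_iff_mem]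
    exact RegNotStrongAux.claim1 q hx
  -- key fact 2 at the level of P ⧸ I
  have key2 : ∀ s : P, s ∉ Ideal.span ({MvPolynomial.X 1, MvPolynomial.X 2} : Set P) →
      ∀ c e : P ⧸ I, s • (X • c) = Z • e → ∃ e' : P ⧸ I, (X - 1) • c = Z • e' := by
    intro s hs c e h
    obtain ⟨c₀, rfl⟩ := Ideal.Quotient.mk_surjective c
    obtain ⟨e₀, rfl⟩ := Ideal.Quotient.mk_surjective e
    rw [RegNotStrongAux.smul_qmk, RegNotStrongAux.smul_qmk, RegNotStrongAux.smul_qmk,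
      Ideal.Quotient.mk_eq_mk_iff_sub_mem] at h
    obtain ⟨e', he'⟩ := RegNotStrongAux.claim2 s c₀ e₀ hs h
    refine ⟨Ideal.Quotient.mk I e', ?_⟩
    rw [RegNotStrongAux.smul_qmk, RegNotStrongAux.smul_qmk,
      Ideal.Quotient.mk_eq_mk_iff_sub_mem]
    exact he'
  constructor
  · -- IsRegularSeq
    intro p hp
    have hann := Module.annihilator_le_of_mem_support hp
    -- annihilator facts
    have hZofList : (Z : P) ∈ Ideal.ofList [Z, X] := Ideal.subset_span (by simp)
    have hXofList : (X : P) ∈ Ideal.ofList [Z, X] := Ideal.subset_span (by simp)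
    have hXp : X ∈ p.asIdeal := by
      apply hann
      rw [Module.mem_annihilator]
      intro m
      obtain ⟨x, rfl⟩ := Submodule.Quotient.mk_surjective _ m
      rw [← Submodule.Quotient.mk_smul, Submodule.Quotient.mk_eq_zero]
      exact Submodule.smul_mem_smul hXofList trivial
    have hZp : Z ∈ p.asIdeal := by
      apply hann
      rw [Module.mem_annihilator]
      intro m
      obtain ⟨x, rfl⟩ := Submodule.Quotient.mk_surjective _ m
      rw [← Submodule.Quotient.mk_smul, Submodule.Quotient.mk_eq_zero]
      exact Submodule.smul_mem_smul hZofList trivial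
    have hYX : ∀ x : P ⧸ I, Y • x = X • (Y • x) := by
      intro x
      obtain ⟨q, rfl⟩ := Ideal.Quotient.mk_surjective x
      rw [RegNotStrongAux.smul_qmk, RegNotStrongAux.smul_qmk,
        Ideal.Quotient.mk_eq_mk_iff_sub_mem]
      have : Y * q - X * (Y * q) = -((Y * (X - 1)) * q) := by ring
      rw [this]
      exact neg_mem (Ideal.mul_mem_right _ _ hYX1)
    have hYp : Y ∈ p.asIdeal := by
      apply hann
      rw [Module.mem_annihilator]
      intro m
      obtain ⟨x, rfl⟩ := Submodule.Quotient.mk_surjective _ m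
      rw [← Submodule.Quotient.mk_smul, hYX x, Submodule.Quotient.mk_smul,
        ← Submodule.Quotient.mk_smul, Submodule.Quotient.mk_eq_zero]
      exact Submodule.smul_mem_smul hXofList trivial
    have hX1 : (X - 1 : P) ∈ p.asIdeal.primeCompl := by
      intro hmem
      have h1 : (1 : P) ∈ p.asIdeal := by
        have := p.asIdeal.sub_mem hXp hmem
        simpa using this
      exact p.isPrime.ne_top ((Ideal.eq_top_iff_one _).mpr h1)
    -- reduce to the sequence over P itself
    rw [isWeaklyRegular_map_algebraMap_iff]
    set S := p.asIdeal.primeCompl with hS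
    -- first element: Z is regular on the localized module
    have hZreg : IsSMulRegular (LocalizedModule S (P ⧸ I)) Z := by
      intro x y hxy
      refine LocalizedModule.induction_on₂ (fun a b s t h => ?_) x y hxy
      replace h : Z • LocalizedModule.mk a s = Z • LocalizedModule.mk b t := h
      rw [LocalizedModule.smul'_mk, LocalizedModule.smul'_mk, LocalizedModule.mk_eq] at h
      obtain ⟨u, hu⟩ := h
      simp only [Submonoid.smul_def, smul_smul] at hu
      have hw : Z • (((u : P) * t) • a - ((u : P) * s) • b) = 0 := by
        rw [smul_sub, smul_smul, smul_smul, sub_eq_zero]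
        convert hu using 2 <;> ring
      have h2 := key1 _ hw
      rw [smul_sub, sub_eq_zero, smul_smul, smul_smul] at h2
      rw [LocalizedModule.mk_eq]
      refine ⟨⟨X - 1, hX1⟩ * u, ?_⟩
      simp only [Submonoid.smul_def, Submonoid.coe_mul, smul_smul]
      convert h2 using 2 <;> ring
    -- second element: X is regular on the quotient of the localized module by Z
    have hspan : Ideal.span ({MvPolynomial.X 1, MvPolynomial.X 2} : Set P) ≤ p.asIdeal := by
      rw [Ideal.span_le]
      rintro q hq
      simp only [Set.mem_insert_iff, Set.mem_singleton_iff] at hq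
      rcases hq with rfl | rfl
      · exact hYp
      · exact hZp
    have key3 : ∀ w : LocalizedModule S (P ⧸ I),
        X • w ∈ Z • (⊤ : Submodule P (LocalizedModule S (P ⧸ I))) →
        w ∈ Z • (⊤ : Submodule P (LocalizedModule S (P ⧸ I))) := by
      intro w hw
      obtain ⟨m, u, rfl⟩ : ∃ m u, w = LocalizedModule.mk m u :=
        LocalizedModule.induction_on (fun m u => ⟨m, u, rfl⟩) w
      rw [RegNotStrongAux.mem_psmul_top] at hw
      obtain ⟨l, hl⟩ := hw
      obtain ⟨e₁, v, rfl⟩ : ∃ e₁ v, l = LocalizedModule.mk e₁ v :=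
        LocalizedModule.induction_on (fun m u => ⟨m, u, rfl⟩) l
      rw [LocalizedModule.smul'_mk, LocalizedModule.smul'_mk, LocalizedModule.mk_eq] at hl
      obtain ⟨u₁, hu₁⟩ := hl
      simp only [Submonoid.smul_def, smul_smul] at hu₁
      -- hu₁ : (↑u₁ * (↑u * Z)) • e₁ = (↑u₁ * (↑v * X)) • m
      have hsnot : ((u₁ : P) * v) ∉
          Ideal.span ({MvPolynomial.X 1, MvPolynomial.X 2} : Set P) := by
        intro hmem'
        exact (u₁ * v).2 (hspan hmem')
      have hyp : ((u₁ : P) * v) • (X • m) = Z • (((u₁ : P) * u) • e₁) := by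
        rw [smul_smul, smul_smul]
        refine Eq.symm ?_
        convert hu₁ using 2 <;> ring
      obtain ⟨e', he'⟩ := key2 _ hsnot m _ hyp
      rw [RegNotStrongAux.mem_psmul_top]
      refine ⟨LocalizedModule.mk e' (⟨X - 1, hX1⟩ * u), ?_⟩
      rw [LocalizedModule.smul'_mk, LocalizedModule.mk_eq]
      refine ⟨1, ?_⟩
      simp only [one_smul, Submonoid.smul_def, Submonoid.coe_mul, smul_smul]
      rw [show ((X - 1) * (u : P)) • m = ((u : P) * 1) • ((X - 1) • m) by
        rw [smul_smul]; congr 1; ring]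
      rw [he', smul_smul]
      congr 1
      ring
    have hXreg : IsSMulRegular (QuotSMulTop Z (LocalizedModule S (P ⧸ I))) X := by
      intro ξ η h
      obtain ⟨x, rfl⟩ := Submodule.Quotient.mk_surjective _ ξ
      obtain ⟨y, rfl⟩ := Submodule.Quotient.mk_surjective _ η
      replace h : X • Submodule.Quotient.mk x = X • (Submodule.Quotient.mk y :
        QuotSMulTop Z (LocalizedModule S (P ⧸ I))) := h
      rw [← Submodule.Quotient.mk_smul, ← Submodule.Quotient.mk_smul,
        Submodule.Quotient.eq] at h
      rw [Submodule.Quotient.eq]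
      exact key3 _ (by rwa [← smul_sub] at h)
    exact IsWeaklyRegular.cons hZreg (IsWeaklyRegular.cons hXreg
      (IsWeaklyRegular.nil (R := P) (M := QuotSMulTop X (QuotSMulTop Z (LocalizedModule S (P ⧸ I))))))
  · -- not strongly regular
    intro h
    have h0 : IsSMulRegular (P ⧸ I) Z :=
      ((isWeaklyRegular_cons_iff _ _ _).mp h).1
    have hh : Z • (Ideal.Quotient.mk I Y) = Z • (0 : P ⧸ I) := by
      rw [smul_zero, RegNotStrongAux.smul_qmk, Ideal.Quotient.eq_zero_iff_mem, mul_comm]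
      exact hYZ
    have hY0 : (Ideal.Quotient.mk I Y : P ⧸ I) = 0 := h0 hh
    rw [Ideal.Quotient.eq_zero_iff_mem] at hY0
    exact RegNotStrongAux.Y_notMem hY0
end
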